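/- arXiv:1906.12144 — 6 statements merged into one kernel-verified Lean document; each statement's English description precedes it below -/
import Mathlib

section
/- Every chordal graph has a simplicial vertex, i.e., a vertex v such that the closed neighborhood N[v] induces a clique. -/
open Finset

variable {V : Type} [Fintype V] [DecidableEq V]

/-- The closed neighborhood `N[v]` of a vertex, as a `Finset`. -/
def closedNbhd (G : SimpleGraph V) [DecidableRel G.Adj] (v : V) : Finset V :=
  insert v (G.neighborFinset v)

/-- The graph `G \ A` obtained by deleting the vertices in `A` (keeping them as
isolated vertices on the same vertex set). -/
def deleteVerts (G : SimpleGraph V) (A : Finset V) : SimpleGraph V where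
  Adj u v := G.Adj u v ∧ u ∉ A ∧ v ∉ A
  symm := ⟨fun u v h => ⟨h.1.symm, h.2.2, h.2.1⟩⟩
  loopless := ⟨fun u h => G.loopless.irrefl u h.1⟩

/-- `C` is a vertex cover of `G`. -/
def IsVertexCover (G : SimpleGraph V) (C : Finset V) : Prop :=
  ∀ ⦃u v : V⦄, G.Adj u v → u ∈ C ∨ v ∈ C

/-- `C` is a minimal vertex cover of `G`. -/
def IsMinVertexCover (G : SimpleGraph V) (C : Finset V) : Prop :=
  IsVertexCover G C ∧ ∀ D : Finset V, D ⊂ C → ¬ IsVertexCover G D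

/-- A graph is chordal if it has no induced cycle of length greater than `3`. -/
def IsChordal (G : SimpleGraph V) : Prop :=
  ∀ n : ℕ, 4 ≤ n → ∀ f : ZMod n → V, Function.Injective f →
    ¬ (∀ i j : ZMod n, G.Adj (f i) (f j) ↔ j = i + 1 ∨ i = j + 1)

/-- `S` is an independent set of `G`. -/
def IsIndepSet (G : SimpleGraph V) (S : Finset V) : Prop :=
  ∀ ⦃u : V⦄, u ∈ S → ∀ ⦃v : V⦄, v ∈ S → ¬ G.Adj u v

/-- `S` is a maximal independent set of `G`. -/
def IsMaxIndepSet (G : SimpleGraph V) (S : Finset V) : Prop :=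
  IsIndepSet G S ∧ ∀ T : Finset V, IsIndepSet G T → S ⊆ T → S = T

/-- `F` is a maximal clique of `G`, i.e. a facet of the clique complex `Δ(G)`. -/
def IsMaxCliqueF (G : SimpleGraph V) (F : Finset V) : Prop :=
  G.IsClique ↑F ∧ ∀ F' : Finset V, G.IsClique ↑F' → F ⊆ F' → F = F'

/-- `M` is an induced matching of `G`: a set of edges of `G` such that no edge of `G`
joins a vertex of one member to a vertex of a different member. -/
def IsInducedMatching (G : SimpleGraph V) (M : Finset (Sym2 V)) : Prop :=
  (∀ e ∈ M, e ∈ G.edgeSet) ∧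
    ∀ e ∈ M, ∀ f ∈ M, e ≠ f → ∀ u v : V, u ∈ e → v ∈ f → ¬ G.Adj u v

/-- The induced matching number `im(G)`. -/
noncomputable def inducedMatchingNumber (G : SimpleGraph V) : ℕ :=
  sSup {n | ∃ M : Finset (Sym2 V), IsInducedMatching G M ∧ M.card = n}

/-- The graph `G` has no edges. -/
def NoEdges (G : SimpleGraph V) : Prop := ∀ u v : V, ¬ G.Adj u v

open MvPolynomial in
/-- The squarefree monomial `∏_{v ∈ C} x_v` associated to a set of vertices. -/
noncomputable def coverMonomial (K : Type) [Field K] (C : Finset V) : MvPolynomial V K :=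
  ∏ v ∈ C, X v

open MvPolynomial in
/-- The cover ideal `J(G)`, generated by the monomials of the minimal vertex covers. -/
noncomputable def coverIdeal (K : Type) [Field K] (G : SimpleGraph V) : Ideal (MvPolynomial V K) :=
  Ideal.span {m | ∃ C : Finset V, IsMinVertexCover G C ∧ m = coverMonomial K C}

open MvPolynomial in
/-- The edge ideal `I(G)`. -/
noncomputable def edgeIdeal (K : Type) [Field K] (G : SimpleGraph V) : Ideal (MvPolynomial V K) :=
  Ideal.span {m | ∃ u v : V, G.Adj u v ∧ m = X u * X v}

open MvPolynomial in
/-- `m` is a linear quotients ordering: each successive colon ideal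
`(m_1, …, m_{i-1}) : m_i` is generated by a subset of the variables. -/
def IsLinQuotOrd {K : Type} [Field K] {ι : Type} [LinearOrder ι]
    (m : ι → MvPolynomial V K) : Prop :=
  ∀ i : ι, ∃ T : Set V,
    (Ideal.span (m '' {j | j < i})).colon (Ideal.span {m i}) =
      Ideal.span ((fun v => (X v : MvPolynomial V K)) '' T)



/-!
Dirac's argument, organised around a vertex instead of a minimal separator. By strong induction
on `s`: for every clique `K ⊆ s` with `s \ K` nonempty, some vertex of `s \ K` is simplicial in
`G[s]`. If some `a ∈ s` sees all of `K` but not all of `s`, let `C` be the part of `s` in a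
component of `G - N[a]` and `S` the neighbours of `a` in `s` adjacent to `C`. Then `S` is a
clique: two nonadjacent `x, y ∈ S`, a shortest `x`–`y` path through `C`, and `a` would form an
induced cycle of length at least four. The induction hypothesis for `C ∪ S` and the clique `S`
gives a vertex of `C`, simplicial in `G[C ∪ S]` and hence in `G[s]`, outside `N[a] ⊇ K`.
Otherwise a vertex of `K` is adjacent to all of `s` and may be deleted, or `K = ∅` and `s` is a
clique.
-/

namespace SimpleGraph

variable {V : Type} {G : SimpleGraph V}

theorem Walk.dist_getVert_of_length_eq_dist {u v : V} (p : G.Walk u v)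
    (hp : p.length = G.dist u v) {i : ℕ} (hi : i ≤ p.length) : G.dist u (p.getVert i) = i := by
  rw [← length_eq_dist_of_subwalk hp (p.isSubwalk_take i), Walk.take_length]
  omega

end SimpleGraph

section

open SimpleGraph

variable {V : Type} {G : SimpleGraph V}

theorem deleteVerts_anti {A B : Finset V} (h : A ⊆ B) : deleteVerts G B ≤ deleteVerts G A :=
  fun _ _ huv => ⟨huv.1, fun hu => huv.2.1 (h hu), fun hv => huv.2.2 (h hv)⟩

theorem IsChordal.false_of_inducedCycle (hG : IsChordal G) {n : ℕ} (hn : 4 ≤ n) {g : ℕ → V}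
    (hg : Set.InjOn g (Set.Iio n))
    (hadj : ∀ i < n, ∀ j < n, G.Adj (g i) (g j) ↔
      j = i + 1 ∨ i = j + 1 ∨ (i = 0 ∧ j = n - 1) ∨ (j = 0 ∧ i = n - 1)) : False := by
  have : NeZero n := ⟨by omega⟩
  have : Fact (1 < n) := ⟨by omega⟩
  have hsucc (i j : ZMod n) :
      j = i + 1 ↔ j.val = i.val + 1 ∨ (i.val = n - 1 ∧ j.val = 0) := by
    rw [← (ZMod.val_injective n).eq_iff, ZMod.val_add, ZMod.val_one]
    have := ZMod.val_lt i
    have := ZMod.val_lt j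
    rcases Nat.lt_or_ge (i.val + 1) n with h | h
    · rw [Nat.mod_eq_of_lt h]; omega
    · rw [show i.val + 1 = n by omega, Nat.mod_self]; omega
  refine hG n hn (fun i => g i.val)
    (fun i j h => ZMod.val_injective n (hg (ZMod.val_lt i) (ZMod.val_lt j) h)) fun i j => ?_
  rw [hadj _ (ZMod.val_lt i) _ (ZMod.val_lt j), hsucc, hsucc]
  omega

theorem IsChordal.false_of_inducedPath_apex (hG : IsChordal G) {d : ℕ} (hd : 2 ≤ d)
    {q : ℕ → V} {a : V}
    (hq : Set.InjOn q (Set.Iic d)) (ha : ∀ i ≤ d, q i ≠ a)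
    (hqq : ∀ i ≤ d, ∀ j ≤ d, G.Adj (q i) (q j) ↔ j = i + 1 ∨ i = j + 1)
    (haq : ∀ i ≤ d, G.Adj a (q i) ↔ i = 0 ∨ i = d) : False := by
  refine hG.false_of_inducedCycle (n := d + 2) (by omega) (g := fun i => if i ≤ d then q i else a)
    (fun i hi j hj h => ?_) (fun i hi j hj => ?_)
  · simp only [Set.mem_Iio] at hi hj
    by_cases hid : i ≤ d <;> by_cases hjd : j ≤ d <;>
      simp only [hid, hjd, if_true, if_false] at h
    · exact hq hid hjd h
    · exact absurd h (ha i hid)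
    · exact absurd h.symm (ha j hjd)
    · omega
  · by_cases hid : i ≤ d <;> by_cases hjd : j ≤ d <;> simp only [hid, hjd, if_true, if_false]
    · rw [hqq i hid j hjd]; omega
    · rw [G.adj_comm, haq i hid]; omega
    · rw [haq j hjd]; omega
    · simp only [SimpleGraph.irrefl, false_iff]; omega

def IsSimplicialIn (G : SimpleGraph V) (s : Finset V) (v : V) : Prop :=
  G.IsClique (G.neighborSet v ∩ s)

theorem IsSimplicialIn.of_erase [DecidableEq V] {s : Finset V} {k v : V}
    (hk : ∀ w ∈ s, w ≠ k → G.Adj k w) (hv : IsSimplicialIn G (s.erase k) v) :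
    IsSimplicialIn G s v := by
  refine (isClique_insert.2
    ⟨hv, fun w hw hkw => hk w (mem_of_mem_erase hw.2) hkw.symm⟩).subset ?_
  rintro w ⟨hvw, hws⟩
  by_cases hwk : w = k
  · exact .inl hwk
  · exact .inr ⟨hvw, mem_erase.2 ⟨hwk, hws⟩⟩

variable [Fintype V] [DecidableEq V] [DecidableRel G.Adj]

@[simp]
theorem mem_closedNbhd {v w : V} : w ∈ closedNbhd G v ↔ w = v ∨ G.Adj v w := by
  simp [closedNbhd]

theorem IsChordal.adj_of_reachable_deleteVerts (hG : IsChordal G) {a x y : V} {A : Finset V}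
    (hA : closedNbhd G a \ {x, y} ⊆ A) (hax : G.Adj a x) (hay : G.Adj a y) (hxy : x ≠ y)
    (hr : (deleteVerts G A).Reachable x y) : G.Adj x y := by
  by_contra hnxy
  obtain ⟨p, hp⟩ := hr.exists_walk_length_eq_dist
  have hd : 2 ≤ p.length := hp ▸ hr.one_lt_dist_of_ne_of_not_adj hxy fun h => hnxy h.1
  -- `p` is a shortest walk, so `dist x (p.getVert i) = i` and `p` is an induced path.
  have hdist (i : ℕ) (hi : i ≤ p.length) : (deleteVerts G A).dist x (p.getVert i) = i :=
    p.dist_getVert_of_length_eq_dist hp hi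
  have hnotA (i : ℕ) (hi : i ≤ p.length) : p.getVert i ∉ A := by
    rcases hi.lt_or_eq with h | rfl
    · exact (p.adj_getVert_succ h).2.1
    · simpa [Nat.sub_add_cancel (by omega : 1 ≤ p.length)] using
        (p.adj_getVert_succ (i := p.length - 1) (by omega)).2.2
  refine hG.false_of_inducedPath_apex hd (q := p.getVert) (a := a) (fun i hi j hj h => ?_)
    (fun i hi h => hnotA i hi (hA ?_)) (fun i hi j hj => ⟨fun h => ?_, ?_⟩)
    (fun i hi => ⟨fun h => ?_, ?_⟩)
  · rw [← hdist i hi, ← hdist j hj, h]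
  · simp [h, hax.ne, hay.ne]
  · have hne : i ≠ j := by rintro rfl; exact G.irrefl h
    have hA' : (deleteVerts G A).Adj (p.getVert i) (p.getVert j) := ⟨h, hnotA i hi, hnotA j hj⟩
    have := hA'.diff_dist_adj (u := x)
    rw [hdist i hi, hdist j hj] at this
    omega
  · rintro (rfl | rfl)
    · exact (p.adj_getVert_succ (by omega)).1
    · exact (p.adj_getVert_succ (by omega)).1.symm
  · by_contra hne
    have hx : p.getVert i ≠ x := fun h' => by
      have := hdist i hi; rw [h', SimpleGraph.dist_self] at this; omega
    have hy : p.getVert i ≠ y := fun h' => by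
      have := hdist i hi; rw [h', ← hp] at this; omega
    exact hnotA i hi (hA (by simp [h, hx, hy]))
  · rintro (rfl | rfl)
    · simpa using hax
    · simpa using hay

theorem IsChordal.isClique_nbrs_adj_component (hG : IsChordal G) (a b : V) :
    G.IsClique {v | G.Adj a v ∧
      ∃ c ∉ closedNbhd G a, (deleteVerts G (closedNbhd G a)).Reachable b c ∧ G.Adj v c} := by
  rintro x ⟨hax, c, hc, hbc, hxc⟩ y ⟨hay, c', hc', hbc', hyc⟩ hxy
  have hle := deleteVerts_anti (G := G) (sdiff_subset : closedNbhd G a \ {x, y} ⊆ _)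
  refine hG.adj_of_reachable_deleteVerts subset_rfl hax hay hxy ?_
  have hxc' : (deleteVerts G (closedNbhd G a \ {x, y})).Adj x c :=
    ⟨hxc, by simp, fun h => hc (mem_sdiff.1 h).1⟩
  have hyc' : (deleteVerts G (closedNbhd G a \ {x, y})).Adj c' y :=
    ⟨hyc.symm, fun h => hc' (mem_sdiff.1 h).1, by simp⟩
  exact hxc'.reachable.trans (((hbc.symm.trans hbc').mono hle).trans hyc'.reachable)

theorem IsChordal.exists_isSimplicialIn_notMem_closedNbhd (hG : IsChordal G)
    {s : Finset V} (ih : ∀ t ⊂ s, ∀ K ⊆ t, G.IsClique (K : Set V) → (t \ K).Nonempty →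
      ∃ v ∈ t \ K, IsSimplicialIn G t v)
    {a b : V} (ha : a ∈ s) (hb : b ∈ s) (hab : b ∉ closedNbhd G a) :
    ∃ v ∈ s, v ∉ closedNbhd G a ∧ IsSimplicialIn G s v := by
  classical
  set H := deleteVerts G (closedNbhd G a)
  set C := s.filter fun c => c ∉ closedNbhd G a ∧ H.Reachable b c
  set S := s.filter fun v => G.Adj a v ∧ ∃ c ∈ C, G.Adj v c
  have hS : G.IsClique (S : Set V) := (hG.isClique_nbrs_adj_component a b).subset fun v hv => by
    obtain ⟨-, hav, c, hc, hvc⟩ := mem_filter.1 hv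
    exact ⟨hav, c, (mem_filter.1 hc).2.1, (mem_filter.1 hc).2.2, hvc⟩
  have hbC : b ∈ C := mem_filter.2 ⟨hb, hab, .rfl⟩
  have hCS : C ∪ S ⊂ s := by
    refine ssubset_iff_of_subset (union_subset (filter_subset _ _) (filter_subset _ _)) |>.2
      ⟨a, ha, ?_⟩
    simp [C]
  obtain ⟨v, hv, hvsimp⟩ := ih _ hCS S subset_union_right hS
    ⟨b, mem_sdiff.2 ⟨mem_union_left _ hbC, fun h => hab (by simp [(mem_filter.1 h).2.1])⟩⟩
  have hvC : v ∈ C := (mem_union.1 (mem_sdiff.1 hv).1).resolve_right (mem_sdiff.1 hv).2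
  obtain ⟨hvs, hva, hbv⟩ := mem_filter.1 hvC
  refine ⟨v, hvs, hva, hvsimp.subset ?_⟩
  rintro w ⟨hvw, hws⟩
  refine ⟨hvw, ?_⟩
  by_cases hwa : w ∈ closedNbhd G a
  · refine mem_union_right _ (mem_filter.2 ⟨hws, ?_, v, hvC, G.adj_symm hvw⟩)
    rcases mem_closedNbhd.1 hwa with rfl | h
    · exact absurd (by simp [G.adj_symm hvw]) hva
    · exact h
  · have hH : H.Adj v w := ⟨hvw, hva, hwa⟩
    exact mem_union_left _ (mem_filter.2 ⟨hws, hwa, hbv.trans hH.reachable⟩)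

theorem IsChordal.exists_isSimplicialIn_notMem (hG : IsChordal G) (s : Finset V) :
    ∀ K ⊆ s, G.IsClique (K : Set V) → (s \ K).Nonempty →
      ∃ v ∈ s \ K, IsSimplicialIn G s v := by
  induction s using Finset.strongInduction with
  | H s ih =>
  intro K hKs hK ⟨u, hu⟩
  by_cases hdom : ∃ a ∈ s, K ⊆ closedNbhd G a ∧ ∃ b ∈ s, b ∉ closedNbhd G a
  · obtain ⟨a, ha, hKa, b, hb, hab⟩ := hdom
    obtain ⟨v, hvs, hva, hv⟩ :=
      hG.exists_isSimplicialIn_notMem_closedNbhd ih ha hb hab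
    exact ⟨v, mem_sdiff.2 ⟨hvs, fun h => hva (hKa h)⟩, hv⟩
  push Not at hdom
  rcases K.eq_empty_or_nonempty with rfl | ⟨k, hk⟩
  · refine ⟨u, hu, (?_ : G.IsClique (s : Set V)).subset Set.inter_subset_right⟩
    intro x hx y hy hxy
    simpa [Ne.symm hxy] using hdom x hx (empty_subset _) y hy
  have hKk : K ⊆ closedNbhd G k := fun j hj =>
    mem_closedNbhd.2 ((eq_or_ne j k).imp_right fun hjk => hK hk hj hjk.symm)
  have hks (w : V) (hw : w ∈ s) (hwk : w ≠ k) : G.Adj k w :=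
    (mem_closedNbhd.1 (hdom k (hKs hk) hKk w hw)).resolve_left hwk
  obtain ⟨hus, huK⟩ := mem_sdiff.1 hu
  obtain ⟨v, hv, hvsimp⟩ := ih (s.erase k) (erase_ssubset (hKs hk)) (K.erase k)
    (erase_subset_erase _ hKs) (hK.subset (by simp))
    ⟨u, by simp [hus, huK, (ne_of_mem_of_not_mem hk huK).symm]⟩
  obtain ⟨⟨hvk, hvs⟩, hvK⟩ : (v ≠ k ∧ v ∈ s) ∧ v ∉ K.erase k := by simpa using hv
  exact ⟨v, mem_sdiff.2 ⟨hvs, fun h => hvK (mem_erase.2 ⟨hvk, h⟩)⟩, hvsimp.of_erase hks⟩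

/-- Every chordal graph has a simplicial vertex. -/
theorem stmt_1 {V : Type} [Fintype V] [DecidableEq V] [Nonempty V] (G : SimpleGraph V)
    (hG : IsChordal G) :
    ∃ v : V, G.IsClique ({v} ∪ G.neighborSet v) := by
  classical
  obtain ⟨v, -, hv⟩ := hG.exists_isSimplicialIn_notMem univ ∅ (empty_subset _)
    (by simp) (by simp)
  refine ⟨v, ?_⟩
  rw [Set.singleton_union, SimpleGraph.isClique_insert]
  exact ⟨by simpa [IsSimplicialIn] using hv, fun w hw _ => hw⟩
end
end

section
/- A finite simple graph is chordal if and only if it admits a simplicial elimination ordering, i.e., an ordering v_1, …, v_n of its vertices such that for each i, the vertex v_i together with those of its neighbors that come after it in the ordering induce a clique. -/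
open Finset

variable {V : Type} [Fintype V] [DecidableEq V]

/-!
If `σ` is a simplicial elimination ordering, the earliest vertex of an induced cycle of length
at least `4` has its two cycle neighbours among its later neighbours, which are therefore
adjacent: a chord.

Conversely, it suffices that every nonempty vertex set `W` of a chordal graph has a simplicial
vertex: eliminate it first and order the rest recursively. By induction on `W`, a vertex `a` not
adjacent to all of `W` misses some simplicial vertex. Let `C` be a component of `W` minus the
closed neighbourhood of `a`, and `S` the vertices of `W` outside `C` adjacent to `C`. Every
vertex of `S` is adjacent to `a`, and `S` is a clique: a non-edge `st` in `S` would give an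
induced cycle formed by `a`, `s`, a shortest path through `C`, and `t`. Recursing into `C ∪ S`
at a vertex adjacent to all of `S` yields a vertex of `C` simplicial in `C ∪ S`, hence in `W`.
-/

namespace SimpleGraph

variable {V : Type} {G : SimpleGraph V}

namespace Walk

-- Equivalent to `p.IsPath ∧ p.IsChordless`, but phrased through vertex positions.
def IsInducedPath {u v : V} (p : G.Walk u v) : Prop :=
  ∀ ⦃i j : ℕ⦄, i < j → j ≤ p.length →
    p.getVert i ≠ p.getVert j ∧ (G.Adj (p.getVert i) (p.getVert j) → j = i + 1)

theorem exists_isInducedPath {X : Set V} {u v : V} (p : G.Walk u v)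
    (hp : ∀ x ∈ p.support, x ∈ X) :
    ∃ q : G.Walk u v, (∀ x ∈ q.support, x ∈ X) ∧ q.IsInducedPath := by
  classical
  have hex : ∃ n, ∃ q : G.Walk u v, (∀ x ∈ q.support, x ∈ X) ∧ q.length = n :=
    ⟨_, p, hp, rfl⟩
  obtain ⟨q, hqX, hqlen⟩ := Nat.find_spec hex
  refine ⟨q, hqX, ?_⟩
  -- `q` is a shortest walk inside `X`, so no detour between two of its positions is shorter
  have shortcut : ∀ i j, j ≤ q.length → ∀ r : G.Walk (q.getVert i) (q.getVert j),
      (∀ x ∈ r.support, x ∈ X) → r.length + i < j → False := by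
    intro i j hj r hrX hr
    have hmin := Nat.find_min' hex ⟨(q.take i).append (r.append (q.drop j)), ?_, rfl⟩
    · simp only [length_append, take_length, drop_length] at hmin
      omega
    · intro x hx
      simp only [mem_support_append_iff] at hx
      rcases hx with hx | hx | hx
      exacts [hqX x ((q.isSubwalk_take i).support_subset hx), hrX x hx,
        hqX x ((q.isSubwalk_drop j).support_subset hx)]
  intro i j hij hj
  constructor
  · intro heq
    refine shortcut i j hj (nil.copy rfl heq) ?_ (by simpa using hij)
    simpa using hqX _ (q.getVert_mem_support i)
  · intro hadj
    by_contra hne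
    refine shortcut i j hj hadj.toWalk ?_ (by simp; omega)
    intro x hx
    simp only [Adj.support_toWalk, List.mem_cons, List.not_mem_nil, or_false] at hx
    rcases hx with rfl | rfl
    exacts [hqX _ (q.getVert_mem_support i), hqX _ (q.getVert_mem_support j)]

end Walk

variable (G) in
def componentIn (X : Set V) (u : V) : Set V :=
  {v | ∃ p : G.Walk u v, ∀ x ∈ p.support, x ∈ X}

section componentIn

variable {X : Set V} {u v w : V}

lemma componentIn_subset : G.componentIn X u ⊆ X :=
  fun _ ⟨p, hp⟩ => hp _ p.end_mem_support

lemma self_mem_componentIn (hu : u ∈ X) : u ∈ G.componentIn X u :=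
  ⟨Walk.nil, by simpa using hu⟩

lemma mem_componentIn_of_adj (hv : v ∈ G.componentIn X u) (hw : w ∈ X) (hvw : G.Adj v w) :
    w ∈ G.componentIn X u := by
  obtain ⟨p, hp⟩ := hv
  refine ⟨p.concat hvw, fun x hx => ?_⟩
  rw [Walk.support_concat, List.mem_append, List.mem_singleton] at hx
  rcases hx with hx | rfl
  exacts [hp x hx, hw]

lemma mem_componentIn_of_mem_support {p : G.Walk u v} (hp : ∀ x ∈ p.support, x ∈ X)
    {x : V} (hx : x ∈ p.support) : x ∈ G.componentIn X u := by
  classical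
  exact ⟨p.takeUntil x hx, fun y hy => hp y (p.support_takeUntil_subset_support hx hy)⟩

lemma exists_walk_of_mem_componentIn (hv : v ∈ G.componentIn X u)
    (hw : w ∈ G.componentIn X u) :
    ∃ p : G.Walk v w, ∀ x ∈ p.support, x ∈ G.componentIn X u := by
  obtain ⟨p, hp⟩ := hv
  obtain ⟨q, hq⟩ := hw
  refine ⟨p.reverse.append q, fun x hx => ?_⟩
  rw [Walk.mem_support_append_iff, Walk.support_reverse, List.mem_reverse] at hx
  rcases hx with hx | hx
  exacts [mem_componentIn_of_mem_support hp hx, mem_componentIn_of_mem_support hq hx]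

end componentIn

variable (G) in
def IsSimplicialIn (W : Set V) (v : V) : Prop :=
  G.IsClique (W ∩ G.neighborSet v)

lemma IsSimplicialIn.mono {W W' : Set V} {v : V} (h : G.IsSimplicialIn W v) (hW : W' ⊆ W) :
    G.IsSimplicialIn W' v :=
  h.subset (Set.inter_subset_inter_left _ hW)

lemma isClique_singleton_union_iff {v : V} {p : V → Prop} :
    G.IsClique ({v} ∪ {w | G.Adj v w ∧ p w}) ↔ G.IsSimplicialIn {w | p w} v := by
  rw [Set.singleton_union, isClique_insert]
  simp only [Set.mem_ofPred_eq, IsSimplicialIn, Set.inter_comm {w | p w}]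
  exact ⟨And.left, fun h => ⟨h, fun _ hb _ => hb.1⟩⟩

lemma exists_not_adj_of_not_isClique {W K : Set V} (hK : G.IsClique K) (hKW : K ⊆ W)
    (hW : ¬ G.IsClique W) :
    ∃ a ∈ W, (∀ k ∈ K, k = a ∨ G.Adj a k) ∧ ∃ b ∈ W, b ≠ a ∧ ¬ G.Adj a b := by
  obtain ⟨x, hx, y, hy, hxy, hnxy⟩ : ∃ x ∈ W, ∃ y ∈ W, x ≠ y ∧ ¬ G.Adj x y := by
    simpa [IsClique, Set.Pairwise] using hW
  wlog hxK : x ∉ K generalizing x y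
  · refine this y hy x hx hxy.symm (fun h => hnxy h.symm) fun hyK => hnxy ?_
    exact hK (not_not.mp hxK) hyK hxy
  by_cases hdom : ∀ k ∈ K, k = x ∨ G.Adj x k
  · exact ⟨x, hx, hdom, y, hy, hxy.symm, hnxy⟩
  · push Not at hdom
    obtain ⟨k, hk, hkx, hxk⟩ := hdom
    refine ⟨k, hKW hk, fun k' hk' => ?_, x, hx, hkx.symm, fun h => hxk h.symm⟩
    by_cases h : k' = k
    exacts [Or.inl h, Or.inr (hK hk hk' (Ne.symm h))]

variable (G) in
def IsPerfectEliminationList : List V → Prop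
  | [] => True
  | v :: l => G.IsSimplicialIn {w | w ∈ l} v ∧ IsPerfectEliminationList l

lemma IsPerfectEliminationList.isSimplicialIn_drop {l : List V}
    (h : G.IsPerfectEliminationList l) (i : ℕ) (hi : i < l.length) :
    G.IsSimplicialIn {w | w ∈ l.drop (i + 1)} l[i] := by
  induction l generalizing i with
  | nil => simp at hi
  | cons v l ih =>
    cases i with
    | zero => simpa using h.1
    | succ i => simpa using ih h.2 i (by simpa using hi)

lemma IsPerfectEliminationList.exists_equiv [Fintype V] {l : List V}
    (h : G.IsPerfectEliminationList l) (hnd : l.Nodup) (hl : ∀ v, v ∈ l) :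
    ∃ σ : Fin (Fintype.card V) ≃ V, ∀ i, G.IsSimplicialIn {w | i < σ.symm w} (σ i) := by
  classical
  have hlen : Fintype.card V = l.length := by
    simpa using Fintype.card_congr (hnd.getEquivOfForallMemList l hl).symm
  set σ := (finCongr hlen).trans (hnd.getEquivOfForallMemList l hl)
  refine ⟨σ, fun i => (h.isSimplicialIn_drop i (by omega)).mono fun w hw => ?_⟩
  obtain ⟨j, rfl⟩ := σ.surjective w
  replace hw : (i : ℕ) < j := by simpa using hw
  have hj : (l.drop (i + 1))[(j : ℕ) - (i + 1)]'(by simp; omega) = l[(j : ℕ)] := by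
    rw [List.getElem_drop]
    congr 1
    omega
  change l[(j : ℕ)] ∈ l.drop (i + 1)
  exact hj ▸ List.getElem_mem _

end SimpleGraph

lemma ZMod.eq_add_one_iff_val {n : ℕ} [NeZero n] (hn : 2 ≤ n) (i j : ZMod n) :
    j = i + 1 ↔ j.val = (i.val + 1) % n := by
  have : Fact (1 < n) := ⟨hn⟩
  rw [← ZMod.val_one n, ← ZMod.val_add, ZMod.val_injective n |>.eq_iff]

lemma ZMod.natCast_ne_zero_of_lt {n k : ℕ} (hk : 0 < k) (hkn : k < n) : (k : ZMod n) ≠ 0 := by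
  rw [Ne, ZMod.natCast_eq_zero_iff]
  exact Nat.not_dvd_of_pos_of_lt hk hkn

section Chordal

open SimpleGraph

variable {V : Type} {G : SimpleGraph V}

theorem not_isChordal_of_cyclic {n : ℕ} (hn : 4 ≤ n) (g : ℕ → V)
    (hinj : ∀ i j, i < j → j < n → g i ≠ g j)
    (hadj : ∀ i j, i < j → j < n →
      (G.Adj (g i) (g j) ↔ j = i + 1 ∨ (i = 0 ∧ j = n - 1))) :
    ¬ IsChordal G := by
  have : NeZero n := ⟨by omega⟩
  have hsucc : ∀ a < n, (a + 1) % n = if a + 1 = n then 0 else a + 1 := by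
    intro a ha
    split_ifs with h
    · rw [h, Nat.mod_self]
    · exact Nat.mod_eq_of_lt (by omega)
  have hadj' : ∀ a b, a < b → b < n →
      (G.Adj (g a) (g b) ↔ b = (a + 1) % n ∨ a = (b + 1) % n) := by
    intro a b hab hb
    rw [hadj a b hab hb, hsucc a (by omega), hsucc b hb]
    split_ifs <;> omega
  refine fun hG => hG n hn (fun i => g i.val) ?_ ?_
  · intro i j hij
    by_contra hne
    rcases lt_or_gt_of_ne (ZMod.val_injective n |>.ne hne) with h | h
    exacts [hinj _ _ h (ZMod.val_lt j) hij, hinj _ _ h (ZMod.val_lt i) hij.symm]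
  · intro i j
    simp only [ZMod.eq_add_one_iff_val (n := n) (by omega)]
    rcases lt_trichotomy i.val j.val with h | h | h
    · exact hadj' _ _ h (ZMod.val_lt j)
    · rw [h, hsucc _ (ZMod.val_lt j)]
      simp only [G.loopless.irrefl, false_iff]
      split_ifs <;> omega
    · rw [G.adj_comm, or_comm]
      exact hadj' _ _ h (ZMod.val_lt i)

theorem not_isChordal_of_isInducedPath_of_apex {s t a : V} (p : G.Walk s t)
    (hp : p.IsInducedPath) (hlen : 2 ≤ p.length) (hs : G.Adj a s) (ht : G.Adj a t)
    (hne : ∀ k ≤ p.length, p.getVert k ≠ a)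
    (hadj : ∀ k ≤ p.length, G.Adj a (p.getVert k) → k = 0 ∨ k = p.length) :
    ¬ IsChordal G := by
  refine not_isChordal_of_cyclic (n := p.length + 2) (by omega) (Walk.cons hs p).getVert
    ?_ ?_
  · intro i j hij hj
    obtain ⟨j, rfl⟩ : ∃ j', j = j' + 1 := ⟨j - 1, by omega⟩
    cases i with
    | zero => simpa using (hne _ (by omega)).symm
    | succ i => simpa using (hp (by omega) (by omega)).1
  · intro i j hij hj
    obtain ⟨j, rfl⟩ : ∃ j', j = j' + 1 := ⟨j - 1, by omega⟩
    cases i with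
    | zero =>
      simp only [Walk.getVert_zero, Walk.getVert_cons_succ]
      constructor
      · intro h
        rcases hadj j (by omega) h with h | h
        · exact Or.inl (by omega)
        · exact Or.inr ⟨trivial, by omega⟩
      · rintro (h | h)
        · obtain rfl : j = 0 := by omega
          simpa using hs
        · rwa [show j = p.length by omega, Walk.getVert_length]
    | succ i =>
      simp only [Walk.getVert_cons_succ, Nat.add_one_ne_zero, false_and, or_false]
      constructor
      · intro h
        have := (hp (by omega) (by omega)).2 h
        omega
      · intro h
        obtain rfl : j = i + 1 := by omega
        exact p.adj_getVert_succ (by omega)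

theorem IsChordal.isClique_of_adj_apex_of_adj_connected (hG : IsChordal G) {C S : Set V}
    {a : V} (hC : ∀ x ∈ C, ∀ y ∈ C, ∃ p : G.Walk x y, ∀ z ∈ p.support, z ∈ C)
    (haC : ∀ c ∈ C, c ≠ a ∧ ¬ G.Adj a c)
    (hS : ∀ s ∈ S, s ∉ C ∧ G.Adj a s ∧ ∃ c ∈ C, G.Adj s c) : G.IsClique S := by
  intro s hs t ht hst
  by_contra hnadj
  obtain ⟨hsC, has, c, hc, hsc⟩ := hS s hs
  obtain ⟨htC, hat, d, hd, htd⟩ := hS t ht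
  obtain ⟨r, hr⟩ := hC c hc d hd
  -- the path `s - c ⋯ d - t` through `C`, shortened to an induced one, closes up with `a`
  obtain ⟨p, hpC, hp⟩ := (Walk.cons hsc (r.concat htd.symm)).exists_isInducedPath
    (X := {x | x = s ∨ x = t ∨ x ∈ C}) (by
      intro x hx
      simp only [Walk.support_cons, Walk.support_concat, List.mem_cons, List.mem_append,
        List.not_mem_nil, or_false] at hx
      rcases hx with rfl | hx | rfl
      exacts [Or.inl rfl, Or.inr (Or.inr (hr x hx)), Or.inr (Or.inl rfl)])
  have hlen : 2 ≤ p.length := by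
    by_contra! h
    interval_cases hl : p.length
    exacts [hst (Walk.eq_of_length_eq_zero hl), hnadj (Walk.adj_of_length_eq_one hl)]
  have hinterior : ∀ k, 0 < k → k < p.length → p.getVert k ∈ C := by
    intro k hk0 hkl
    have hks : p.getVert k ≠ s := by simpa using ((hp hk0 hkl.le).1).symm
    have hkt : p.getVert k ≠ t := by simpa using (hp hkl le_rfl).1
    simpa [hks, hkt] using hpC _ (p.getVert_mem_support k)
  refine not_isChordal_of_isInducedPath_of_apex p hp hlen has hat (fun k hk => ?_)
    (fun k hk hak => ?_) hG
  · rcases Nat.eq_zero_or_pos k with rfl | hk0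
    · simpa using has.ne.symm
    rcases hk.lt_or_eq with hkl | rfl
    · exact (haC _ (hinterior k hk0 hkl)).1
    · simpa using hat.ne.symm
  · by_contra! h
    exact (haC _ (hinterior k (by omega) (by omega))).2 hak

theorem IsChordal.exists_isSimplicialIn_not_adj (hG : IsChordal G) (W : Finset V) :
    ∀ a ∈ W, (∃ b ∈ W, b ≠ a ∧ ¬ G.Adj a b) →
      ∃ v ∈ W, v ≠ a ∧ ¬ G.Adj a v ∧ G.IsSimplicialIn W v := by
  classical
  induction W using Finset.strongInduction with | H W IH =>
  rintro a ha ⟨c₀, hc₀W, hc₀a, hac₀⟩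
  set X : Set V := {x | x ∈ W ∧ x ≠ a ∧ ¬ G.Adj a x}
  set C := G.componentIn X c₀
  set S : Set V := {s | s ∈ W ∧ s ∉ C ∧ ∃ c ∈ C, G.Adj s c}
  have hCX : C ⊆ X := componentIn_subset
  have hc₀ : c₀ ∈ C := self_mem_componentIn ⟨hc₀W, hc₀a, hac₀⟩
  have hSa : ∀ s ∈ S, G.Adj a s := by
    rintro s ⟨hsW, hsC, c, hc, hsc⟩
    by_contra has
    have hsa : s ≠ a := by
      rintro rfl
      exact (hCX hc).2.2 hsc
    exact hsC (mem_componentIn_of_adj hc ⟨hsW, hsa, has⟩ hsc.symm)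
  have hS : G.IsClique S := hG.isClique_of_adj_apex_of_adj_connected
    (fun x hx y hy => exists_walk_of_mem_componentIn hx hy) (fun c hc => (hCX hc).2)
    (fun s hs => ⟨hs.2.1, hSa s hs, hs.2.2⟩)
  -- `C ∪ S` omits `a` but contains every neighbour in `W` of a vertex of `C`
  set W' := W.filter (fun x => x ∈ C ∨ x ∈ S)
  have hW'W : W' ⊂ W := by
    refine Finset.filter_ssubset.mpr ⟨a, ha, ?_⟩
    rintro (haC | haS)
    exacts [(hCX haC).2.1 rfl, G.loopless.irrefl a (hSa a haS)]
  suffices ∃ v ∈ C, G.IsSimplicialIn W' v by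
    obtain ⟨v, hv, hsimp⟩ := this
    refine ⟨v, (hCX hv).1, (hCX hv).2.1, (hCX hv).2.2, hsimp.subset ?_⟩
    rintro x ⟨hxW, hvx⟩
    refine ⟨Finset.mem_filter.mpr ⟨hxW, ?_⟩, hvx⟩
    by_cases hxC : x ∈ C
    exacts [Or.inl hxC, Or.inr ⟨hxW, hxC, v, hv, hvx.symm⟩]
  by_cases hW' : G.IsClique (W' : Set V)
  · exact ⟨c₀, hc₀, hW'.subset Set.inter_subset_left⟩
  obtain ⟨a', ha', hSa', hb'⟩ := exists_not_adj_of_not_isClique hS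
    (fun s hs => Finset.mem_filter.mpr ⟨hs.1, Or.inr hs⟩) hW'
  obtain ⟨v, hv, hva', hav', hsimp⟩ := IH W' hW'W a' ha' hb'
  refine ⟨v, ?_, hsimp⟩
  rcases (Finset.mem_filter.mp hv).2 with hvC | hvS
  · exact hvC
  · exact ((hSa' v hvS).elim hva' hav').elim

theorem IsChordal.exists_isSimplicialIn (hG : IsChordal G) {W : Finset V} (hW : W.Nonempty) :
    ∃ v ∈ W, G.IsSimplicialIn W v := by
  by_cases hclique : G.IsClique (W : Set V)
  · obtain ⟨v, hv⟩ := hW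
    exact ⟨v, hv, hclique.subset Set.inter_subset_left⟩
  obtain ⟨a, ha, -, hb⟩ := exists_not_adj_of_not_isClique (K := ∅) (by simp)
    (Set.empty_subset _) hclique
  obtain ⟨v, hv, -, -, hsimp⟩ := hG.exists_isSimplicialIn_not_adj W a ha hb
  exact ⟨v, hv, hsimp⟩

theorem IsChordal.exists_isPerfectEliminationList (hG : IsChordal G) (W : Finset V) :
    ∃ l : List V, l.Nodup ∧ (∀ v, v ∈ l ↔ v ∈ W) ∧ G.IsPerfectEliminationList l := by
  classical
  induction W using Finset.strongInduction with | H W IH =>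
  rcases W.eq_empty_or_nonempty with rfl | hW
  · exact ⟨[], List.nodup_nil, by simp, trivial⟩
  obtain ⟨v, hv, hsimp⟩ := hG.exists_isSimplicialIn hW
  obtain ⟨l, hnd, hl, hpeo⟩ := IH (W.erase v) (Finset.erase_ssubset hv)
  refine ⟨v :: l, List.nodup_cons.mpr ⟨fun h => by simpa using (hl v).mp h, hnd⟩, fun w => ?_,
    hsimp.mono fun w hw => Finset.mem_of_mem_erase ((hl w).mp hw), hpeo⟩
  by_cases hwv : w = v
  · simp [hwv, hv]
  · simp [hl, hwv]

theorem isChordal_of_isSimplicialIn {ι : Type*} [LinearOrder ι] (σ : ι ≃ V)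
    (hσ : ∀ i, G.IsSimplicialIn {w | i < σ.symm w} (σ i)) : IsChordal G := by
  intro n hn f hf hcyc
  have : NeZero n := ⟨by omega⟩
  have h1 : (1 : ZMod n) ≠ 0 := by
    simpa using ZMod.natCast_ne_zero_of_lt (n := n) one_pos (by omega)
  have h2 : (2 : ZMod n) ≠ 0 := by
    simpa using ZMod.natCast_ne_zero_of_lt (n := n) two_pos (by omega)
  have h3 : (3 : ZMod n) ≠ 0 := by
    simpa using ZMod.natCast_ne_zero_of_lt (n := n) three_pos hn
  obtain ⟨i, -, hi⟩ :=
    Finset.univ.exists_min_image (fun i => σ.symm (f i)) Finset.univ_nonempty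
  have hsimp : G.IsSimplicialIn {w | σ.symm (f i) < σ.symm w} (f i) := by
    simpa using hσ (σ.symm (f i))
  -- both cycle neighbours of the earliest cycle vertex come later, so they must be adjacent
  have hlater : ∀ j, j ≠ i → G.Adj (f i) (f j) →
      f j ∈ {w | σ.symm (f i) < σ.symm w} ∩ G.neighborSet (f i) := fun j hj hadj =>
    ⟨(hi j (Finset.mem_univ j)).lt_of_ne fun h => hj (hf (σ.symm.injective h)).symm, hadj⟩
  have hprev := hlater (i - 1) (fun h => h1 (by linear_combination -h))
    ((hcyc _ _).mpr (Or.inr (by ring)))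
  have hnext := hlater (i + 1) (fun h => h1 (by linear_combination h))
    ((hcyc _ _).mpr (Or.inl rfl))
  have hadj := hsimp hprev hnext (hf.ne fun h => h2 (by linear_combination -h))
  rcases (hcyc _ _).mp hadj with h | h
  · exact h1 (by linear_combination h)
  · exact h3 (by linear_combination -h)

end Chordal

theorem stmt_2_general {V : Type} [Fintype V] (G : SimpleGraph V) :
    IsChordal G ↔
      ∃ σ : Fin (Fintype.card V) ≃ V, ∀ i : Fin (Fintype.card V),
        G.IsClique ({σ i} ∪ {w : V | G.Adj (σ i) w ∧ i < σ.symm w}) := by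
  simp only [SimpleGraph.isClique_singleton_union_iff]
  constructor
  · intro hG
    obtain ⟨l, hnd, hl, hpeo⟩ := hG.exists_isPerfectEliminationList Finset.univ
    exact hpeo.exists_equiv hnd fun v => (hl v).mpr (Finset.mem_univ v)
  · rintro ⟨σ, hσ⟩
    exact isChordal_of_isSimplicialIn σ hσ

/-- Dirac's theorem: a finite simple graph is chordal if and only if it admits a
simplicial elimination ordering. -/
theorem stmt_2 {V : Type} [Fintype V] [DecidableEq V] (G : SimpleGraph V) :
    IsChordal G ↔
      ∃ σ : Fin (Fintype.card V) ≃ V, ∀ i : Fin (Fintype.card V),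
        G.IsClique ({σ i} ∪ {w : V | G.Adj (σ i) w ∧ i < σ.symm w}) :=
  stmt_2_general G
end

section
/- If G is a chordal graph, then the independence complex of G is shellable. -/
open Finset

variable {V : Type} [Fintype V] [DecidableEq V]

/-!
A chordal graph with an edge has an edge `uv` with `N[v] ⊆ N[u]`: take `v`, `u` to be the first
two vertices of a longest induced path; a neighbour of `v` outside `N[u]` would either extend the
path or close an induced cycle of length at least four. Then `u` is a shedding vertex: the facets
of `Ind(G)` avoiding `u` are the facets of `Ind(G - u)`, and those containing `u` are the cones
`u * F` over the facets `F` of `Ind(G - N[u])`. Shelling `Ind(G - u)` first and then the cones,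
each cone `u * F` meets the earlier facet extending `F` in `G - u` in a codimension-one face, so
the two shellings (given by induction) concatenate.
-/

namespace SimpleGraph

variable {α : Type*} {G : SimpleGraph α}

def IsInducedPath (G : SimpleGraph α) (L : List α) : Prop :=
  L.Nodup ∧ ∀ i j (hi : i < L.length) (hj : j < L.length),
    G.Adj L[i] L[j] ↔ (j = i + 1 ∨ i = j + 1)

lemma IsInducedPath.take {L : List α} (hL : IsInducedPath G L) (n : ℕ) :
    IsInducedPath G (L.take n) := by
  refine ⟨hL.1.sublist (List.take_sublist _ _), fun i j hi hj => ?_⟩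
  simp only [List.getElem_take]
  exact hL.2 i j _ _

lemma IsInducedPath.cons {L : List α} {w : α} (hL : IsInducedPath G L) (hw : w ∉ L)
    (hadj : ∀ i (hi : i < L.length), G.Adj w L[i] ↔ i = 0) : IsInducedPath G (w :: L) := by
  refine ⟨List.nodup_cons.mpr ⟨hw, hL.1⟩, fun i j hi hj => ?_⟩
  rcases i with _ | i <;> rcases j with _ | j
  · simp
  · simpa using hadj j (by simpa using hj)
  · simpa [G.adj_comm] using hadj i (by simpa using hi)
  · simpa using hL.2 i j (by simpa using hi) (by simpa using hj)

end SimpleGraph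

lemma ZMod.natCast_eq_natCast_add_one_iff {n i j : ℕ} (hi : i < n) (hj : j < n) :
    (j : ZMod n) = i + 1 ↔ j = i + 1 ∨ (i + 1 = n ∧ j = 0) := by
  rw [← Nat.cast_add_one, ZMod.natCast_eq_natCast_iff', Nat.mod_eq_of_lt hj]
  rcases (show i + 1 ≤ n from hi).lt_or_eq with h | h
  · rw [Nat.mod_eq_of_lt h]; omega
  · rw [h, Nat.mod_self]; omega

section Chordal

variable {α : Type} {G : SimpleGraph α}

lemma IsChordal.exists_adj_of_adj_ends (hG : IsChordal G) {L : List α} {w : α}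
    (hL : G.IsInducedPath L) (h3 : 3 ≤ L.length) (hw : w ∉ L)
    (h0 : G.Adj w L[0]) (hlast : G.Adj w L[L.length - 1]) :
    ∃ i, ∃ hi : i < L.length, 0 < i ∧ i + 1 < L.length ∧ G.Adj w L[i] := by
  by_contra! hnone
  have hadj : ∀ i (hi : i < L.length), G.Adj w L[i] ↔ (i = 0 ∨ i + 1 = L.length) := by
    intro i hi
    refine ⟨fun h => ?_, ?_⟩
    · by_contra! h'
      exact hnone i hi (by omega) (by omega) h
    · rintro (rfl | h)
      · exact h0
      · convert hlast using 3; omega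
  -- `w` closes `L` up to an induced cycle of length `L.length + 1 ≥ 4`
  set C := w :: L
  have hC : ∀ p q (hp : p < C.length) (hq : q < C.length), G.Adj C[p] C[q] ↔
      (q = p + 1 ∨ (p + 1 = C.length ∧ q = 0)) ∨
        (p = q + 1 ∨ (q + 1 = C.length ∧ p = 0)) := by
    intro p q hp hq
    rcases p with _ | p <;> rcases q with _ | q
    · simpa [C] using List.ne_nil_of_length_pos (by omega)
    · simp only [C, List.getElem_cons_zero, List.getElem_cons_succ, hadj q (by simpa [C] using hq)]
      simp
    · simp only [C, List.getElem_cons_zero, List.getElem_cons_succ, G.adj_comm _ w,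
        hadj p (by simpa [C] using hp)]
      simp [or_comm]
    · simp only [C, List.getElem_cons_succ,
        hL.2 p q (by simpa [C] using hp) (by simpa [C] using hq)]
      simp
  have : NeZero C.length := ⟨by simp [C]⟩
  refine hG C.length (by simp [C]; omega) (fun x => C[x.val]'(ZMod.val_lt x)) ?_ fun x y => ?_
  · intro x y hxy
    exact ZMod.val_injective _
      ((List.Nodup.getElem_inj_iff (List.nodup_cons.mpr ⟨hw, hL.1⟩)).mp hxy)
  · rw [← ZMod.natCast_zmod_val x, ← ZMod.natCast_zmod_val y,
      ZMod.natCast_eq_natCast_add_one_iff (ZMod.val_lt x) (ZMod.val_lt y),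
      ZMod.natCast_eq_natCast_add_one_iff (ZMod.val_lt y) (ZMod.val_lt x)]
    simp only [ZMod.val_natCast_of_lt (ZMod.val_lt x), ZMod.val_natCast_of_lt (ZMod.val_lt y)]
    exact hC _ _ _ _

lemma IsChordal.exists_dominated_edge (hG : IsChordal G)
    {W : Finset α} {a b : α} (ha : a ∈ W) (hb : b ∈ W) (hab : G.Adj a b) :
    ∃ u ∈ W, ∃ v ∈ W, G.Adj u v ∧ ∀ w ∈ W, G.Adj v w → w = u ∨ G.Adj u w := by
  classical
  set P : Set (List α) := {L | G.IsInducedPath L ∧ ∀ x ∈ L, x ∈ W}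
  have hab_mem : [a, b] ∈ P := by
    refine ⟨⟨by simp [hab.ne], fun i j hi hj => ?_⟩, by simp [ha, hb]⟩
    simp only [List.length_cons, List.length_nil] at hi hj
    interval_cases i <;> interval_cases j <;> simp [hab, hab.symm]
  have hbdd : List.length '' P ⊆ Set.Iic W.card := by
    rintro _ ⟨L, hL, rfl⟩
    rw [Set.mem_Iic, ← List.toFinset_card_of_nodup hL.1.1]
    exact Finset.card_le_card fun x hx => hL.2 x (List.mem_toFinset.mp hx)
  obtain ⟨L, ⟨hL, hLW⟩, hLmax⟩ :=
    Set.Finite.exists_maximalFor' List.length P ((Set.finite_Iic _).subset hbdd) ⟨_, hab_mem⟩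
  have hlongest : ∀ L' ∈ P, L'.length ≤ L.length := fun L' hL' =>
    (le_total L'.length L.length).elim id (hLmax hL')
  obtain ⟨x0, x1, t, rfl⟩ : ∃ x0 x1 t, L = x0 :: x1 :: t := by
    have := hlongest _ hab_mem
    rcases L with _ | ⟨x0, _ | ⟨x1, t⟩⟩ <;> simp at this
    exact ⟨x0, x1, t, rfl⟩
  set L := x0 :: x1 :: t
  have hx01 : G.Adj x0 x1 := (hL.2 0 1 (by simp [L]) (by simp [L])).mpr (Or.inl rfl)
  refine ⟨x1, hLW x1 (by simp [L]), x0, hLW x0 (by simp [L]), hx01.symm, fun w hwW hw => ?_⟩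
  by_contra! hne
  have hwL : w ∉ L := by
    intro hmem
    obtain ⟨i, hi, rfl⟩ := List.getElem_of_mem hmem
    obtain rfl : i = 1 := by have := (hL.2 0 i (by simp [L]) hi).mp hw; omega
    exact hne.1 rfl
  by_cases hQ : ∃ i, ∃ hi : i < L.length, 0 < i ∧ G.Adj w L[i]
  · obtain ⟨hlt, hpos, hadj⟩ := Nat.find_spec hQ
    have hne1 : Nat.find hQ ≠ 1 := by
      have hw1 : ∀ i (hi : i < L.length), G.Adj w L[i] → i ≠ 1 := by
        rintro i hi h rfl
        exact hne.2 (by simpa [L, G.adj_comm] using h)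
      exact hw1 _ hlt hadj
    obtain ⟨i, hi, hipos, hilt, hwi⟩ := hG.exists_adj_of_adj_ends (hL.take (Nat.find hQ + 1))
      (by rw [List.length_take]; omega) (fun h => hwL (List.mem_of_mem_take h))
      (by simpa [L] using hw.symm)
      (by simp only [List.getElem_take, List.length_take]; convert hadj using 2; omega)
    simp only [List.length_take, List.getElem_take] at hi hilt hwi
    exact Nat.find_min hQ (by omega) ⟨by omega, hipos, hwi⟩
  · push Not at hQ
    have hwP : w :: L ∈ P := by
      refine ⟨hL.cons hwL fun i hi => ⟨fun h => ?_, ?_⟩, ?_⟩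
      · by_contra h0; exact hQ i hi (by omega) h
      · rintro rfl; exact hw.symm
      · simpa [hwW] using hLW
    simpa using hlongest _ hwP

end Chordal

section Shelling

variable {α : Type*} [DecidableEq α]

def ShellsAfter (L : List (Finset α)) (F : Finset α) : Prop :=
  ∀ A ∈ L, ∃ u ∈ F \ A, ∃ B ∈ L, F \ B = {u}

inductive IsShelling : List (Finset α) → Prop
  | nil : IsShelling []
  | snoc {L : List (Finset α)} {F : Finset α} :
      IsShelling L → ShellsAfter L F → IsShelling (L ++ [F])

lemma ShellsAfter.append {L M : List (Finset α)} {F : Finset α} (hL : ShellsAfter L F)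
    (hM : ShellsAfter M F) : ShellsAfter (L ++ M) F := by
  intro A hA
  rcases List.mem_append.mp hA with hA | hA
  · obtain ⟨u, hu, B, hB, hFB⟩ := hL A hA
    exact ⟨u, hu, B, List.mem_append_left _ hB, hFB⟩
  · obtain ⟨u, hu, B, hB, hFB⟩ := hM A hA
    exact ⟨u, hu, B, List.mem_append_right _ hB, hFB⟩

lemma ShellsAfter.notMem {L : List (Finset α)} {F : Finset α} (h : ShellsAfter L F) : F ∉ L :=
  fun hF => by simpa using (h F hF).choose_spec.1

lemma ShellsAfter.insert_of_subset {L : List (Finset α)} {u : α} {T B : Finset α}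
    (hu : ∀ A ∈ L, u ∉ A) (hB : B ∈ L) (hTB : T ⊆ B) : ShellsAfter L (insert u T) := by
  refine fun A hA =>
    ⟨u, Finset.mem_sdiff.mpr ⟨Finset.mem_insert_self u T, hu A hA⟩, B, hB, ?_⟩
  ext x
  simp only [Finset.mem_sdiff, Finset.mem_insert, Finset.mem_singleton]
  exact ⟨fun ⟨hx, hxB⟩ => hx.resolve_right (hxB <| hTB ·),
    by rintro rfl; exact ⟨.inl rfl, hu B hB⟩⟩

lemma IsShelling.singleton (F : Finset α) : IsShelling [F] :=
  IsShelling.nil.snoc (L := []) fun _ h => absurd h List.not_mem_nil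

lemma IsShelling.nodup {L : List (Finset α)} (h : IsShelling L) : L.Nodup := by
  induction h with
  | nil => exact List.nodup_nil
  | snoc _ hF ih => exact ih.append (List.nodup_singleton _) (by simpa using hF.notMem)

lemma IsShelling.append {L M : List (Finset α)} (hL : IsShelling L) (hM : IsShelling M)
    (hLM : ∀ F ∈ M, ShellsAfter L F) : IsShelling (L ++ M) := by
  induction hM with
  | nil => simpa using hL
  | @snoc M F _ hF ih =>
    rw [← List.append_assoc]
    exact (ih fun A hA => hLM A (by simp [hA])).snoc ((hLM F (by simp)).append hF)

lemma IsShelling.map_insert {L : List (Finset α)} (h : IsShelling L) {u : α}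
    (hu : ∀ F ∈ L, u ∉ F) : IsShelling (L.map (insert u)) := by
  induction h with
  | nil => exact IsShelling.nil
  | @snoc L F _ hF ih =>
    have hsdiff : ∀ A, insert u F \ insert u A = F \ A := fun A => by
      rw [Finset.insert_sdiff_insert, Finset.sdiff_insert_of_notMem (hu F (by simp))]
    rw [List.map_append, List.map_singleton]
    refine (ih fun A hA => hu A (by simp [hA])).snoc ?_
    simp only [ShellsAfter, List.mem_map, forall_exists_index, and_imp, forall_apply_eq_imp_iff₂,
      exists_exists_and_eq_and, hsdiff]
    exact hF

lemma IsShelling.getElem {L : List (Finset α)} (h : IsShelling L) {i j : ℕ} (hij : i < j)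
    (hj : j < L.length) :
    ∃ u ∈ L[j] \ L[i], ∃ ℓ, ∃ hℓ : ℓ < j, L[j] \ L[ℓ] = {u} := by
  induction h with
  | nil => simp at hj
  | @snoc L F _ hF ih =>
    simp only [List.length_append, List.length_singleton] at hj
    rcases (Nat.lt_succ_iff.mp hj).lt_or_eq with hj | rfl
    · obtain ⟨u, hu, ℓ, hℓ, hFℓ⟩ := ih hj
      refine ⟨u, ?_, ℓ, hℓ, ?_⟩
      · simpa [List.getElem_append_left, hj, hij.trans hj] using hu
      · simpa [List.getElem_append_left, hj, hℓ.trans hj] using hFℓ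
    · obtain ⟨u, hu, B, hB, hFB⟩ := hF L[i] (List.getElem_mem _)
      obtain ⟨ℓ, hℓ, rfl⟩ := List.getElem_of_mem hB
      refine ⟨u, ?_, ℓ, hℓ, ?_⟩
      · simpa [List.getElem_append_left, hij] using hu
      · simpa [List.getElem_append_left, hℓ] using hFB

end Shelling

section IndependenceComplex

variable {α : Type} {G : SimpleGraph α}

/-- `S` is a facet of `Ind(G[W])`. -/
def IsMaxIndepIn (G : SimpleGraph α) (W S : Finset α) : Prop :=
  Maximal (fun T => T ⊆ W ∧ IsIndepSet G T) S

lemma isIndepSet_insert [DecidableEq α] {u : α} {T : Finset α} :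
    IsIndepSet G (insert u T) ↔ IsIndepSet G T ∧ ∀ t ∈ T, ¬G.Adj u t := by
  simp only [IsIndepSet, Finset.mem_insert, forall_eq_or_imp, G.irrefl, not_false_eq_true,
    true_and]
  constructor
  · rintro ⟨hu, hT⟩
    exact ⟨fun x hx => (hT x hx).2, hu⟩
  · rintro ⟨hT, hu⟩
    exact ⟨hu, fun x hx => ⟨fun h => hu x hx h.symm, hT hx⟩⟩

lemma isMaxIndepIn_iff_eq_of_forall_not_adj {W S : Finset α}
    (hW : ∀ a ∈ W, ∀ b ∈ W, ¬G.Adj a b) : IsMaxIndepIn G W S ↔ S = W := by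
  have hWind : IsIndepSet G W := fun a ha b hb => hW a ha b hb
  refine ⟨fun hS => hS.eq_of_le ⟨subset_rfl, hWind⟩ hS.prop.1, ?_⟩
  rintro rfl
  exact ⟨⟨subset_rfl, hWind⟩, fun T hT _ => hT.1⟩

lemma exists_isMaxIndepIn_superset [Finite α] {W T : Finset α} (hTW : T ⊆ W)
    (hT : IsIndepSet G T) : ∃ S, T ⊆ S ∧ IsMaxIndepIn G W S :=
  Finite.exists_le_maximal (p := fun T => T ⊆ W ∧ IsIndepSet G T) ⟨hTW, hT⟩

/-- `u` is a shedding vertex: a facet of `W.erase u` meets `N(u)`, since otherwise `v` would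
extend it. -/
lemma isMaxIndepIn_erase_iff [DecidableEq α] {W S : Finset α} {u v : α} (hv : v ∈ W)
    (huv : G.Adj u v)
    (hdom : ∀ w ∈ W, G.Adj v w → w = u ∨ G.Adj u w) (huS : u ∉ S) :
    IsMaxIndepIn G (W.erase u) S ↔ IsMaxIndepIn G W S := by
  constructor
  · intro hS
    obtain ⟨s, hs, hus⟩ : ∃ s ∈ S, G.Adj u s := by
      by_contra! hnone
      have hvS : v ∉ S := fun h => hnone v h huv
      have hext : insert v S ⊆ W.erase u ∧ IsIndepSet G (insert v S) := by
        refine ⟨Finset.insert_subset (Finset.mem_erase.mpr ⟨huv.ne', hv⟩) hS.prop.1,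
          isIndepSet_insert.mpr ⟨hS.prop.2, fun t ht hvt => ?_⟩⟩
        rcases hdom t (Finset.mem_of_mem_erase (hS.prop.1 ht)) hvt with rfl | hut
        · exact huS ht
        · exact hnone t ht hut
      exact hvS (hS.2 hext (Finset.subset_insert v S) (Finset.mem_insert_self v S))
    refine ⟨⟨hS.prop.1.trans (Finset.erase_subset u W), hS.prop.2⟩, fun T hT hST => ?_⟩
    have huT : u ∉ T := fun hu => hT.2 hu (hST hs) hus
    exact hS.2 ⟨fun x hx => Finset.mem_erase.mpr ⟨fun h => huT (h ▸ hx), hT.1 hx⟩, hT.2⟩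
      hST
  · intro hS
    refine hS.mono (fun T hT => ⟨hT.1.trans (Finset.erase_subset u W), hT.2⟩)
      ⟨fun x hx => Finset.mem_erase.mpr ⟨fun h => huS (h ▸ hx), hS.prop.1 hx⟩, hS.prop.2⟩

lemma mem_closedNbhd_s3 [Fintype α] [DecidableEq α] [DecidableRel G.Adj] {u x : α} :
    x ∈ closedNbhd G u ↔ x = u ∨ G.Adj u x := by
  simp [closedNbhd]

lemma notMem_sdiff_closedNbhd [Fintype α] [DecidableEq α] [DecidableRel G.Adj] {W : Finset α}
    {u : α} : u ∉ W \ closedNbhd G u :=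
  fun h => (Finset.mem_sdiff.mp h).2 (mem_closedNbhd_s3.mpr (.inl rfl))

lemma isMaxIndepIn_insert_iff [Fintype α] [DecidableEq α] [DecidableRel G.Adj]
    {W T : Finset α} {u : α} (hu : u ∈ W) (huT : u ∉ T) :
    IsMaxIndepIn G W (insert u T) ↔ IsMaxIndepIn G (W \ closedNbhd G u) T := by
  have hlink : ∀ X : Finset α, u ∉ X → ((insert u X ⊆ W ∧ IsIndepSet G (insert u X)) ↔
      (X ⊆ W \ closedNbhd G u ∧ IsIndepSet G X)) := by
    intro X huX
    simp only [Finset.insert_subset_iff, hu, true_and, isIndepSet_insert, Finset.subset_sdiff,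
      Finset.disjoint_left, mem_closedNbhd_s3, not_or]
    exact ⟨fun ⟨hXW, hX, hadj⟩ =>
        ⟨⟨hXW, fun x hx => ⟨fun h => huX (h ▸ hx), hadj x hx⟩⟩, hX⟩,
      fun ⟨⟨hXW, hXN⟩, hX⟩ => ⟨hXW, hX, fun x hx => (hXN hx).2⟩⟩
  constructor
  · intro hS
    refine ⟨(hlink T huT).mp hS.prop, fun X hX hTX => ?_⟩
    have huX : u ∉ X := fun h => notMem_sdiff_closedNbhd (hX.1 h)
    have := hS.2 ((hlink X huX).mpr hX) (Finset.insert_subset_insert u hTX)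
    exact (Finset.insert_subset_insert_iff huX).mp this
  · intro hT
    refine ⟨(hlink T huT).mpr hT.prop, fun Y hY hTY => ?_⟩
    have huY : u ∈ Y := hTY (Finset.mem_insert_self u T)
    rw [← Finset.insert_erase huY] at hY ⊢
    have hX := (hlink _ (Finset.notMem_erase u Y)).mp hY
    refine Finset.insert_subset_insert u (hT.2 hX fun x hx => ?_)
    exact Finset.mem_erase.mpr ⟨fun h => huT (h ▸ hx), hTY (Finset.mem_insert_of_mem hx)⟩

lemma isMaxIndepIn_iff_of_dominated [Fintype α] [DecidableEq α] [DecidableRel G.Adj]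
    {W S : Finset α} {u v : α} (hu : u ∈ W) (hv : v ∈ W) (huv : G.Adj u v)
    (hdom : ∀ w ∈ W, G.Adj v w → w = u ∨ G.Adj u w) :
    IsMaxIndepIn G W S ↔ IsMaxIndepIn G (W.erase u) S ∨
      ∃ T, IsMaxIndepIn G (W \ closedNbhd G u) T ∧ insert u T = S := by
  by_cases huS : u ∈ S
  · have hleft : ¬IsMaxIndepIn G (W.erase u) S :=
      fun h => Finset.notMem_erase u W (h.prop.1 huS)
    rw [or_iff_right hleft, ← Finset.insert_erase huS,
      isMaxIndepIn_insert_iff hu (Finset.notMem_erase u S)]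
    refine ⟨fun h => ⟨_, h, rfl⟩, ?_⟩
    rintro ⟨T, hT, hTS⟩
    obtain rfl : T = S.erase u := by
      rw [← Finset.erase_insert (notMem_sdiff_closedNbhd <| hT.prop.1 ·), hTS,
        Finset.erase_insert (Finset.notMem_erase u S)]
    exact hT
  · have hright : ¬∃ T, IsMaxIndepIn G (W \ closedNbhd G u) T ∧ insert u T = S := by
      rintro ⟨T, -, rfl⟩
      exact huS (Finset.mem_insert_self u T)
    rw [or_iff_left hright, isMaxIndepIn_erase_iff hv huv hdom huS]

lemma isMaxIndepSet_iff_isMaxIndepIn_univ [Fintype α] {S : Finset α} :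
    IsMaxIndepSet G S ↔ IsMaxIndepIn G Finset.univ S := by
  simp only [IsMaxIndepSet, IsMaxIndepIn, Maximal, Finset.subset_univ, true_and]
  exact and_congr_right fun _ => forall₂_congr fun T _ =>
    ⟨fun h hST => (h hST).ge, fun h hST => hST.antisymm (h hST)⟩

end IndependenceComplex

theorem IsChordal.exists_isShelling_isMaxIndepIn {α : Type} [Fintype α] [DecidableEq α]
    {G : SimpleGraph α} (hG : IsChordal G) (W : Finset α) :
    ∃ L : List (Finset α), (∀ S, IsMaxIndepIn G W S ↔ S ∈ L) ∧ IsShelling L := by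
  classical
  induction W using Finset.strongInduction with
  | H W ih =>
  by_cases hE : ∃ a ∈ W, ∃ b ∈ W, G.Adj a b
  · obtain ⟨a, ha, b, hb, hab⟩ := hE
    obtain ⟨u, hu, v, hv, huv, hdom⟩ := hG.exists_dominated_edge ha hb hab
    obtain ⟨L₁, hL₁, hsh₁⟩ := ih (W.erase u) (Finset.erase_ssubset hu)
    obtain ⟨L₂, hL₂, hsh₂⟩ := ih (W \ closedNbhd G u)
      ((Finset.ssubset_iff_of_subset Finset.sdiff_subset).mpr ⟨u, hu, notMem_sdiff_closedNbhd⟩)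
    have hu₁ : ∀ A ∈ L₁, u ∉ A := fun A hA h =>
      Finset.notMem_erase u W (((hL₁ A).mpr hA).prop.1 h)
    have hu₂ : ∀ T ∈ L₂, u ∉ T := fun T hT h =>
      notMem_sdiff_closedNbhd (((hL₂ T).mpr hT).prop.1 h)
    refine ⟨L₁ ++ L₂.map (insert u), fun S => ?_,
      hsh₁.append (hsh₂.map_insert hu₂) ?_⟩
    · simp only [isMaxIndepIn_iff_of_dominated hu hv huv hdom, hL₁, hL₂, List.mem_append,
        List.mem_map]
    · simp only [List.mem_map, forall_exists_index, and_imp, forall_apply_eq_imp_iff₂]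
      intro T hT
      have hT' := (hL₂ T).mpr hT
      have hTW : T ⊆ W.erase u := fun x hx => Finset.mem_erase.mpr
        ⟨fun h => hu₂ T hT (h ▸ hx), Finset.sdiff_subset (hT'.prop.1 hx)⟩
      obtain ⟨B, hTB, hB⟩ := exists_isMaxIndepIn_superset hTW hT'.prop.2
      exact ShellsAfter.insert_of_subset hu₁ ((hL₁ B).mp hB) hTB
  · push Not at hE
    exact ⟨[W], fun S => by rw [isMaxIndepIn_iff_eq_of_forall_not_adj hE, List.mem_singleton],
      IsShelling.singleton W⟩

/-- The independence complex of a chordal graph is shellable. -/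
theorem stmt_3 {V : Type} [Fintype V] [DecidableEq V] (G : SimpleGraph V)
    (hG : IsChordal G) :
    ∃ (k : ℕ) (F : Fin k → Finset V),
      Function.Injective F ∧ (∀ S : Finset V, IsMaxIndepSet G S ↔ ∃ i, F i = S) ∧
      ∀ i j : Fin k, i < j →
        ∃ u ∈ F j \ F i, ∃ ℓ : Fin k, ℓ < j ∧ F j \ F ℓ = {u} := by
  obtain ⟨L, hL, hshell⟩ := hG.exists_isShelling_isMaxIndepIn Finset.univ
  refine ⟨L.length, L.get, List.nodup_iff_injective_get.mp hshell.nodup, fun S => ?_,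
    fun i j hij => ?_⟩
  · rw [isMaxIndepSet_iff_isMaxIndepIn_univ, hL, List.mem_iff_get]
  · obtain ⟨u, hu, ℓ, hℓ, hjℓ⟩ := hshell.getElem hij j.isLt
    exact ⟨u, hu, ⟨ℓ, hℓ.trans j.isLt⟩, hℓ, hjℓ⟩
end

section
/- An ordering F_1, …, F_k of the facets of the independence complex of a graph G is a shelling if and only if the corresponding ordering of complements F_1^c, …, F_k^c (as squarefree monomials) is a linear quotients ordering for the cover ideal J(G). -/
open Finset

variable {V : Type} [Fintype V] [DecidableEq V]

/-
The colon ideal `(x^{F_ℓᶜ} : ℓ < j) : x^{F_jᶜ}` is the monomial ideal generated by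
the `x^{F_ℓᶜ \ F_jᶜ} = x^{F_j \ F_ℓ}`, ℓ < j. A monomial ideal generated by squarefree monomials
is generated by variables exactly when each generator is divisible by a generator of degree one,
i.e. when every `F_j \ F_ℓ` contains some `u` with `F_j \ F_ℓ' = {u}` for an `ℓ' < j`; this is
the shelling condition at `j`.
-/

open MvPolynomial

section

variable {V : Type} {K : Type} [Field K]

def IsShellingOrder [DecidableEq V] {ι : Type*} [LinearOrder ι] (F : ι → Finset V) : Prop :=
  ∀ i j : ι, i < j → ∃ u ∈ F j \ F i, ∃ ℓ : ι, ℓ < j ∧ F j \ F ℓ = {u}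

noncomputable def squarefreeExponent (C : Finset V) : V →₀ ℕ :=
  Finsupp.indicator C fun _ _ => 1

lemma squarefreeExponent_apply [DecidableEq V] (C : Finset V) (v : V) :
    squarefreeExponent C v = if v ∈ C then 1 else 0 := by
  simp [squarefreeExponent, Finsupp.indicator_apply]

lemma squarefreeExponent_le_iff [DecidableEq V] {C : Finset V} {μ : V →₀ ℕ} :
    squarefreeExponent C ≤ μ ↔ ∀ v ∈ C, μ v ≠ 0 := by
  simp only [Finsupp.le_def, squarefreeExponent_apply]
  refine forall_congr' fun v => ?_
  split_ifs <;> simp_all [Nat.one_le_iff_ne_zero]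

lemma squarefreeExponent_le_add_iff [DecidableEq V] {C D : Finset V} {μ : V →₀ ℕ} :
    squarefreeExponent C ≤ μ + squarefreeExponent D ↔ squarefreeExponent (C \ D) ≤ μ := by
  simp only [Finsupp.le_def, Finsupp.add_apply, squarefreeExponent_apply, Finset.mem_sdiff]
  refine forall_congr' fun v => ?_
  split_ifs <;> simp_all

lemma coverMonomial_eq_monomial (C : Finset V) :
    coverMonomial K C = monomial (squarefreeExponent C) 1 := by
  simpa [coverMonomial, squarefreeExponent] using prod_X_pow (R := K) 1 C

lemma mem_span_coverMonomial_image_iff {ι : Type*} {C : ι → Finset V} {S : Set ι}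
    {p : MvPolynomial V K} :
    p ∈ Ideal.span ((fun i => coverMonomial K (C i)) '' S) ↔
      ∀ μ ∈ p.support, ∃ i ∈ S, squarefreeExponent (C i) ≤ μ := by
  simp only [coverMonomial_eq_monomial, ← Set.image_image (fun s => monomial s (1 : K))
    (fun i => squarefreeExponent (C i)), mem_ideal_span_monomial_image, Set.exists_mem_image]

lemma coverMonomial_mem_span_coverMonomial_image_iff {ι : Type*} {C : ι → Finset V}
    {S : Set ι} {D : Finset V} :
    coverMonomial K D ∈ Ideal.span ((fun i => coverMonomial K (C i)) '' S) ↔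
      ∃ i ∈ S, C i ⊆ D := by
  classical
  rw [mem_span_coverMonomial_image_iff, coverMonomial_eq_monomial, support_monomial,
    if_neg one_ne_zero]
  simp [squarefreeExponent_le_iff, squarefreeExponent_apply, Finset.subset_iff]

lemma coverMonomial_mem_span_X_image_iff [DecidableEq V] {C : Finset V} {T : Set V} :
    coverMonomial K C ∈ Ideal.span (X '' T : Set (MvPolynomial V K)) ↔ ∃ u ∈ T, u ∈ C := by
  simp [mem_ideal_span_X_image, coverMonomial_eq_monomial, squarefreeExponent_apply]

lemma colon_span_coverMonomial_image [DecidableEq V] {ι : Type*} (C : ι → Finset V) (S : Set ι)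
    (D : Finset V) :
    (Ideal.span ((fun i => coverMonomial K (C i)) '' S)).colon (Ideal.span {coverMonomial K D}) =
      Ideal.span ((fun i => coverMonomial K (C i \ D)) '' S) := by
  ext p
  rw [Ideal.mem_colon_span_singleton, mem_span_coverMonomial_image_iff,
    mem_span_coverMonomial_image_iff, coverMonomial_eq_monomial]
  constructor
  · intro h μ hμ
    obtain ⟨i, hi, hle⟩ := h (μ + squarefreeExponent D) <| by
      rwa [mem_support_iff, coeff_mul_monomial, mul_one, ← mem_support_iff]
    exact ⟨i, hi, squarefreeExponent_le_add_iff.mp hle⟩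
  · intro h ν hν
    rw [mem_support_iff, coeff_mul_monomial'] at hν
    split_ifs at hν with hle
    · obtain ⟨i, hi, hle'⟩ := h (ν - squarefreeExponent D) (by simpa using hν)
      refine ⟨i, hi, ?_⟩
      rw [← tsub_add_cancel_of_le hle]
      exact squarefreeExponent_le_add_iff.mpr hle'
    · exact absurd rfl hν

lemma exists_span_coverMonomial_image_eq_span_X_iff [DecidableEq V] {ι : Type*} (A : ι → Finset V)
    (S : Set ι) :
    (∃ T : Set V, Ideal.span ((fun i => coverMonomial K (A i)) '' S) =
        Ideal.span (X '' T : Set (MvPolynomial V K))) ↔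
      ∀ i ∈ S, ∃ u ∈ A i, ∃ j ∈ S, A j = {u} := by
  constructor
  · rintro ⟨T, hT⟩ i hi
    have hmem : ∀ j ∈ S, coverMonomial K (A j) ∈ Ideal.span (X '' T : Set (MvPolynomial V K)) :=
      fun j hj => hT ▸ Ideal.subset_span ⟨j, hj, rfl⟩
    obtain ⟨u, huT, huA⟩ := coverMonomial_mem_span_X_image_iff.mp (hmem i hi)
    have hXu : coverMonomial K {u} ∈ Ideal.span ((fun i => coverMonomial K (A i)) '' S) := by
      rw [hT, coverMonomial, Finset.prod_singleton]
      exact Ideal.subset_span ⟨u, huT, rfl⟩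
    obtain ⟨j, hj, hsub⟩ := coverMonomial_mem_span_coverMonomial_image_iff.mp hXu
    refine ⟨u, huA, j, hj, (Finset.subset_singleton_iff.mp hsub).resolve_left fun hempty => ?_⟩
    -- otherwise `1 = x^∅` would lie in an ideal generated by variables
    obtain ⟨v, -, hv⟩ := coverMonomial_mem_span_X_image_iff.mp (hmem j hj)
    simp [hempty] at hv
  · intro h
    refine ⟨{u | ∃ j ∈ S, A j = {u}}, le_antisymm ?_ ?_⟩
    · rw [Ideal.span_le]
      rintro _ ⟨i, hi, rfl⟩
      obtain ⟨u, huA, j, hj, hA⟩ := h i hi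
      exact coverMonomial_mem_span_X_image_iff.mpr ⟨u, ⟨j, hj, hA⟩, huA⟩
    · rw [Ideal.span_le]
      rintro _ ⟨u, ⟨j, hj, hA⟩, rfl⟩
      have hXu : coverMonomial K (A j) = X u := by rw [hA, coverMonomial, Finset.prod_singleton]
      exact hXu ▸ Ideal.subset_span ⟨j, hj, rfl⟩

theorem isShellingOrder_iff_isLinQuotOrd_coverMonomial_compl [Fintype V] [DecidableEq V]
    {ι : Type} [LinearOrder ι] (F : ι → Finset V) :
    IsShellingOrder F ↔ IsLinQuotOrd (fun i => coverMonomial K (F i)ᶜ) := by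
  unfold IsShellingOrder IsLinQuotOrd
  simp only [colon_span_coverMonomial_image (fun i => (F i)ᶜ), compl_sdiff_compl,
    exists_span_coverMonomial_image_eq_span_X_iff, Set.mem_ofPred_eq]
  exact ⟨fun h j i hi => h i j hi, fun h i j hi => h j i hi⟩

end

theorem stmt_5_general (K : Type) [Field K] {V : Type} [Fintype V] [LinearOrder V]
    (k : ℕ) (F : Fin k → Finset V) :
    (∀ i j : Fin k, i < j →
        ∃ u ∈ F j \ F i, ∃ ℓ : Fin k, ℓ < j ∧ F j \ F ℓ = {u}) ↔
      IsLinQuotOrd (fun i : Fin k => coverMonomial K (F i)ᶜ) :=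
  isShellingOrder_iff_isLinQuotOrd_coverMonomial_compl F

/-- An ordering of the facets of the independence complex is a shelling iff the
corresponding ordering of complements is a linear quotients ordering for `J(G)`. -/
theorem stmt_5 (K : Type) [Field K] {V : Type} [Fintype V] [LinearOrder V]
    (G : SimpleGraph V) (k : ℕ) (F : Fin k → Finset V) (hinj : Function.Injective F)
    (henum : ∀ S : Finset V, IsMaxIndepSet G S ↔ ∃ i, F i = S) :
    (∀ i j : Fin k, i < j →
        ∃ u ∈ F j \ F i, ∃ ℓ : Fin k, ℓ < j ∧ F j \ F ℓ = {u}) ↔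
      IsLinQuotOrd (fun i : Fin k => coverMonomial K (F i)ᶜ) :=
  stmt_5_general K k F
end

section
/- Let G be a chordal graph and x a vertex such that N[x] induces a clique on at least 2 vertices. Let A_1, …, A_a be the minimal generators of J(G \ N[x]) and B_1, …, B_b the minimal generators of J(G \ {x}), both in linear quotients order, and let B_{i_1}, …, B_{i_k} (i_1 < ⋯ < i_k) be those B_j not containing N(x). Then N(x)A_1, …, N(x)A_a, xB_{i_1}, …, xB_{i_k} is a linear quotients ordering for J(G). -/
open Finset

variable {V : Type} [Fintype V] [DecidableEq V]

/-!
A minimal vertex cover `C` of `G` either avoids `x`, and then `C = N(x) ∪ D` with `D` a minimal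
cover of `G \ N[x]`, or contains `x`, and then `C = {x} ∪ D` with `D` a minimal cover of `G \ x`
not containing `N(x)`. For squarefree monomials `(m_{C_l} : l < i) : m_{C_i}` is generated by the
`m_{C_l \ C_i}`, so linear quotients is the exchange property: for `j < i` there are
`v ∈ C_j \ C_i` and `l < i` with `C_l ⊆ C_i ∪ {v}`. It passes from the two given orders to the
joined one. Comparing a cover `{x} ∪ D` with an earlier cover `N(x) ∪ A`, the clique `N[x]`
forces `N(x) \ D` to be a single vertex `y`, and a minimal cover of `G \ N[x]` inside `D` gives
a cover of the first kind below `{x, y} ∪ D`.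
-/

section CoverMonomial

open MvPolynomial

variable {σ K : Type} [Field K]

theorem coverMonomial_eq_monomial_s7 (C : Finset σ) :
    coverMonomial K C = monomial (∑ v ∈ C, Finsupp.single v 1) 1 := by
  rw [monomial_sum_one]; rfl

theorem coverMonomial_singleton (v : σ) : coverMonomial K {v} = X v :=
  prod_singleton _ _

variable [DecidableEq σ]

theorem sum_single_one_apply (C : Finset σ) (v : σ) :
    (∑ w ∈ C, Finsupp.single w 1 : σ →₀ ℕ) v = if v ∈ C then 1 else 0 := by
  simp [Finsupp.single_apply]

theorem coverMonomial_union {C D : Finset σ} (h : Disjoint C D) :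
    coverMonomial K (C ∪ D) = coverMonomial K C * coverMonomial K D :=
  prod_union h

theorem X_mul_coverMonomial {v : σ} {C : Finset σ} (h : v ∉ C) :
    X v * coverMonomial K C = coverMonomial K (insert v C) :=
  (prod_insert h).symm

theorem sum_single_one_le_iff {C : Finset σ} {d : σ →₀ ℕ} :
    ∑ v ∈ C, Finsupp.single v 1 ≤ d ↔ ∀ v ∈ C, d v ≠ 0 := by
  simp only [Finsupp.le_def, sum_single_one_apply]
  refine forall_congr' fun v => ?_
  split_ifs <;> simp [*, Nat.one_le_iff_ne_zero]

variable {ι : Type} {S : Set ι} {C : ι → Finset σ}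

theorem mem_span_coverMonomial_iff {f : MvPolynomial σ K} :
    f ∈ Ideal.span ((fun l => coverMonomial K (C l)) '' S) ↔
      ∀ d ∈ f.support, ∃ l ∈ S, ∀ v ∈ C l, d v ≠ 0 := by
  simp only [coverMonomial_eq_monomial_s7]
  rw [← Set.image_image (fun e => monomial e (1 : K)), mem_ideal_span_monomial_image]
  simp only [Set.exists_mem_image, sum_single_one_le_iff]

theorem coverMonomial_mem_span_iff {D : Finset σ} :
    coverMonomial K D ∈ Ideal.span ((fun l => coverMonomial K (C l)) '' S) ↔
      ∃ l ∈ S, C l ⊆ D := by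
  classical
  rw [mem_span_coverMonomial_iff, coverMonomial_eq_monomial_s7, support_monomial, if_neg one_ne_zero]
  simp [sum_single_one_apply, subset_iff]

theorem coverMonomial_mem_span_X_iff {D : Finset σ} {T : Set σ} :
    coverMonomial K D ∈ Ideal.span ((fun v => (X v : MvPolynomial σ K)) '' T) ↔
      ∃ v ∈ T, v ∈ D := by
  simp_rw [← coverMonomial_singleton, coverMonomial_mem_span_iff, singleton_subset_iff]

theorem span_coverMonomial_colon (D : Finset σ) :
    (Ideal.span ((fun l => coverMonomial K (C l)) '' S)).colon (Ideal.span {coverMonomial K D}) =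
      Ideal.span ((fun l => coverMonomial K (C l \ D)) '' S) := by
  ext f
  have hsupp : ∀ e, (f * monomial e (1 : K)).support = f.support.map (addRightEmbedding e) :=
    fun e => AddMonoidAlgebra.support_coeff_mul_single f 1 (by simp) e
  rw [Ideal.mem_colon_span_singleton, mem_span_coverMonomial_iff, mem_span_coverMonomial_iff,
    coverMonomial_eq_monomial_s7, hsupp]
  simp only [Finset.forall_mem_map, addRightEmbedding_apply, Finsupp.add_apply,
    sum_single_one_apply, mem_sdiff, and_imp]
  refine forall₂_congr fun d _ => exists_congr fun l => and_congr_right fun _ =>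
    forall₂_congr fun v _ => ?_
  split_ifs <;> simp [*]

def HasLinQuotExchange {ι : Type} [LinearOrder ι] (C : ι → Finset σ) : Prop :=
  ∀ ⦃i j : ι⦄, j < i → ∃ v ∈ C j, v ∉ C i ∧ ∃ l < i, C l ⊆ insert v (C i)

theorem isLinQuotOrd_coverMonomial_iff {ι : Type} [LinearOrder ι] {C : ι → Finset σ} :
    IsLinQuotOrd (fun i => coverMonomial K (C i)) ↔ HasLinQuotExchange C := by
  have hsub : ∀ {s t : Finset σ} {v : σ}, s \ t ⊆ {v} ↔ s ⊆ insert v t := by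
    intro s t v; rw [sdiff_le_iff, sup_eq_union, union_comm, ← insert_eq]
  simp only [IsLinQuotOrd, span_coverMonomial_colon]
  constructor
  · intro h i j hji
    obtain ⟨T, hT⟩ := h i
    have hj : coverMonomial K (C j \ C i) ∈
        Ideal.span ((fun l => coverMonomial K (C l \ C i)) '' {l | l < i}) :=
      Ideal.subset_span ⟨j, hji, rfl⟩
    obtain ⟨v, hvT, hv⟩ := coverMonomial_mem_span_X_iff.mp (hT ▸ hj)
    have hXv : coverMonomial K {v} ∈
        Ideal.span ((fun l => coverMonomial K (C l \ C i)) '' {l | l < i}) := by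
      rw [hT, coverMonomial_singleton]; exact Ideal.subset_span ⟨v, hvT, rfl⟩
    obtain ⟨l, hl, hlv⟩ := coverMonomial_mem_span_iff.mp hXv
    exact ⟨v, (mem_sdiff.mp hv).1, (mem_sdiff.mp hv).2, l, hl, hsub.mp hlv⟩
  · intro h i
    refine ⟨{v | ∃ l < i, C l \ C i ⊆ {v}}, le_antisymm ?_ ?_⟩
    · rw [Ideal.span_le]
      rintro _ ⟨j, hji, rfl⟩
      obtain ⟨v, hvj, hvi, l, hl, hlv⟩ := h hji
      exact coverMonomial_mem_span_X_iff.mpr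
        ⟨v, ⟨l, hl, hsub.mpr hlv⟩, mem_sdiff.mpr ⟨hvj, hvi⟩⟩
    · rw [Ideal.span_le]
      rintro _ ⟨v, ⟨l, hl, hlv⟩, rfl⟩
      beta_reduce
      rw [SetLike.mem_coe, ← coverMonomial_singleton]
      exact coverMonomial_mem_span_iff.mpr ⟨l, hl, hlv⟩

end CoverMonomial

section VertexCover

variable {α : Type} {G : SimpleGraph α}

@[simp]
theorem deleteVerts_adj {A : Finset α} {u v : α} :
    (deleteVerts G A).Adj u v ↔ G.Adj u v ∧ u ∉ A ∧ v ∉ A :=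
  Iff.rfl

theorem IsVertexCover.mono {C D : Finset α} (hC : IsVertexCover G C) (h : C ⊆ D) :
    IsVertexCover G D :=
  fun _ _ huv => (hC huv).imp (@h _) (@h _)

theorem IsVertexCover.deleteVerts_mono {A A' : Finset α} {C : Finset α}
    (hC : IsVertexCover (deleteVerts G A) C) (h : A ⊆ A') : IsVertexCover (deleteVerts G A') C :=
  fun _ _ huv => hC ⟨huv.1, fun hu => huv.2.1 (h hu), fun hv => huv.2.2 (h hv)⟩

theorem IsVertexCover.exists_isMinVertexCover_subset {C : Finset α} (hC : IsVertexCover G C) :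
    ∃ D ⊆ C, IsMinVertexCover G D := by
  obtain ⟨D, hDC, hD⟩ := exists_minimal_le_of_wellFoundedLT (IsVertexCover G) C hC
  exact ⟨D, hDC, hD.1, fun D' hD' hcov => hD'.not_ge (hD.2 hcov hD'.le)⟩

variable [DecidableEq α]

theorem isMinVertexCover_iff {C : Finset α} :
    IsMinVertexCover G C ↔ IsVertexCover G C ∧ ∀ v ∈ C, ∃ w, G.Adj v w ∧ w ∉ C := by
  refine ⟨fun ⟨hcov, hmin⟩ => ⟨hcov, fun v hv => ?_⟩,
    fun ⟨hcov, hpriv⟩ => ⟨hcov, ?_⟩⟩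
  · by_contra! hall
    refine hmin (C.erase v) (erase_ssubset hv) fun u w huw => ?_
    rcases hcov huw with hu | hw
    · by_cases huv : u = v
      · subst huv; exact Or.inr (mem_erase.mpr ⟨huw.ne.symm, hall w huw⟩)
      · exact Or.inl (mem_erase.mpr ⟨huv, hu⟩)
    · by_cases hwv : w = v
      · subst hwv; exact Or.inl (mem_erase.mpr ⟨huw.ne, hall u huw.symm⟩)
      · exact Or.inr (mem_erase.mpr ⟨hwv, hw⟩)
  · intro D hDC hD
    obtain ⟨v, hvC, hvD⟩ := exists_of_ssubset hDC
    obtain ⟨w, hvw, hwC⟩ := hpriv v hvC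
    exact (hD hvw).elim hvD fun hw => hwC (hDC.subset hw)

theorem IsMinVertexCover.disjoint_deleteVerts {A C : Finset α}
    (hC : IsMinVertexCover (deleteVerts G A) C) : Disjoint A C := by
  refine disjoint_left.mpr fun v hvA hvC => ?_
  obtain ⟨w, hvw, -⟩ := (isMinVertexCover_iff.mp hC).2 v hvC
  exact hvw.2.1 hvA

theorem IsMinVertexCover.notMem_of_mem_deleteVerts {A C : Finset α}
    (hC : IsMinVertexCover (deleteVerts G A) C) {v : α} (hv : v ∈ A) : v ∉ C :=
  disjoint_left.mp hC.disjoint_deleteVerts hv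

end VertexCover

section Neighborhood

variable (G : SimpleGraph V) [DecidableRel G.Adj] (x : V)

theorem isMinVertexCover_union_neighborFinset_iff {D : Finset V}
    (hD : Disjoint (closedNbhd G x) D) :
    IsMinVertexCover G (G.neighborFinset x ∪ D) ↔
      IsMinVertexCover (deleteVerts G (closedNbhd G x)) D := by
  rw [closedNbhd, disjoint_insert_left, disjoint_left] at hD
  simp only [isMinVertexCover_iff, IsVertexCover, deleteVerts_adj, closedNbhd, mem_union,
    mem_insert, SimpleGraph.mem_neighborFinset] at hD ⊢
  -- a vertex of `N(x)` is kept by its edge to `x`, which lies outside `N(x) ∪ D`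
  grind [SimpleGraph.adj_symm, SimpleGraph.irrefl]

theorem isMinVertexCover_insert_iff {D : Finset V} (hx : x ∉ D) :
    IsMinVertexCover G (insert x D) ↔
      IsMinVertexCover (deleteVerts G {x}) D ∧ ¬ G.neighborFinset x ⊆ D := by
  simp only [isMinVertexCover_iff, IsVertexCover, deleteVerts_adj, mem_insert, mem_singleton,
    subset_iff, SimpleGraph.mem_neighborFinset]
  grind [SimpleGraph.adj_symm, SimpleGraph.irrefl]

theorem neighborFinset_subset_insert (hcl : G.IsClique (closedNbhd G x : Set V))
    {D : Finset V} (hD : IsVertexCover (deleteVerts G {x}) D) {y : V}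
    (hy : y ∈ G.neighborFinset x) (hyD : y ∉ D) : G.neighborFinset x ⊆ insert y D := by
  intro z hz
  rw [mem_insert]
  by_contra! h
  have hyz : G.Adj y z := hcl (subset_insert _ _ hy) (subset_insert _ _ hz) h.1.symm
  have hne : ∀ w ∈ G.neighborFinset x, w ∉ ({x} : Finset V) := fun w hw => by
    rw [mem_singleton]; exact ((G.mem_neighborFinset x w).mp hw).ne'
  exact (hD ⟨hyz, hne y hy, hne z hz⟩).elim hyD h.2

theorem exists_subset_of_isVertexCover_deleteVerts_singleton {ι : Type} {A : ι → Finset V}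
    (hAenum : ∀ D, IsMinVertexCover (deleteVerts G (closedNbhd G x)) D ↔ ∃ i, A i = D)
    {D : Finset V} (hD : IsVertexCover (deleteVerts G {x}) D) : ∃ i, A i ⊆ D := by
  have hD' : IsVertexCover (deleteVerts G (closedNbhd G x)) D :=
    hD.deleteVerts_mono (singleton_subset_iff.mpr (mem_insert_self x _))
  obtain ⟨E, hED, hE⟩ := hD'.exists_isMinVertexCover_subset
  obtain ⟨i, rfl⟩ := (hAenum E).mp hE
  exact ⟨i, hED⟩

end Neighborhood

section JoinCovers

variable {α ι μ : Type} [DecidableEq α]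
  (N : Finset α) (x : α) (A : ι → Finset α) (B : μ → Finset α)

def joinCovers : ι ⊕ₗ μ → Finset α :=
  fun p => Sum.elim (fun i => N ∪ A i) (fun q => insert x (B q)) (ofLex p)

@[simp]
theorem joinCovers_inl (i : ι) :
    joinCovers N x A B (toLex (Sum.inl i)) = N ∪ A i :=
  rfl

@[simp]
theorem joinCovers_inr (q : μ) :
    joinCovers N x A B (toLex (Sum.inr q)) = insert x (B q) :=
  rfl

end JoinCovers

section JoinCoversOfGraph

variable {ι κ μ : Type} (G : SimpleGraph V) [DecidableRel G.Adj] (x : V)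
  {A : ι → Finset V} {B : κ → Finset V} {idx : μ → κ}

theorem isMinVertexCover_iff_exists_joinCovers
    (hAenum : ∀ D, IsMinVertexCover (deleteVerts G (closedNbhd G x)) D ↔ ∃ i, A i = D)
    (hBenum : ∀ D, IsMinVertexCover (deleteVerts G {x}) D ↔ ∃ j, B j = D)
    (hidxenum : ∀ j, (∃ q, idx q = j) ↔ ¬ G.neighborFinset x ⊆ B j) {C : Finset V} :
    IsMinVertexCover G C ↔ ∃ p, joinCovers (G.neighborFinset x) x A (B ∘ idx) p = C := by
  constructor
  · intro hC
    by_cases hxC : x ∈ C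
    · obtain ⟨hCx, hN⟩ := (isMinVertexCover_insert_iff G x (notMem_erase x C)).mp
        (by rwa [insert_erase hxC])
      obtain ⟨j, hj⟩ := (hBenum _).mp hCx
      obtain ⟨q, rfl⟩ := (hidxenum j).mpr (hj ▸ hN)
      exact ⟨toLex (Sum.inr q), by simp [joinCovers, hj, insert_erase hxC]⟩
    · have hN : G.neighborFinset x ⊆ C := fun y hy =>
        (hC.1 ((G.mem_neighborFinset x y).mp hy)).resolve_left hxC
      have hdisj : Disjoint (closedNbhd G x) (C \ G.neighborFinset x) := by
        rw [closedNbhd, disjoint_insert_left]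
        exact ⟨fun h => hxC (mem_sdiff.mp h).1, disjoint_sdiff⟩
      have hCN := (isMinVertexCover_union_neighborFinset_iff G x hdisj).mp
        (by rwa [union_sdiff_of_subset hN])
      obtain ⟨i, hi⟩ := (hAenum _).mp hCN
      exact ⟨toLex (Sum.inl i), by simp [joinCovers, hi, union_sdiff_of_subset hN]⟩
  · rintro ⟨i | q, rfl⟩
    · have hAi := (hAenum (A i)).mpr ⟨i, rfl⟩
      exact (isMinVertexCover_union_neighborFinset_iff G x hAi.disjoint_deleteVerts).mpr hAi
    · have hBq := (hBenum (B (idx q))).mpr ⟨idx q, rfl⟩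
      have hxB := hBq.notMem_of_mem_deleteVerts (mem_singleton_self x)
      exact (isMinVertexCover_insert_iff G x hxB).mpr ⟨hBq, (hidxenum _).mp ⟨q, rfl⟩⟩

theorem hasLinQuotExchange_joinCovers [LinearOrder ι] [LinearOrder κ] [LinearOrder μ]
    (hcl : G.IsClique (closedNbhd G x : Set V))
    (hAenum : ∀ D, IsMinVertexCover (deleteVerts G (closedNbhd G x)) D ↔ ∃ i, A i = D)
    (hA : HasLinQuotExchange A) (hBmin : ∀ j, IsMinVertexCover (deleteVerts G {x}) (B j))
    (hB : HasLinQuotExchange B) (hidx : StrictMono idx)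
    (hidxenum : ∀ j, (∃ q, idx q = j) ↔ ¬ G.neighborFinset x ⊆ B j) :
    HasLinQuotExchange (joinCovers (G.neighborFinset x) x A (B ∘ idx)) := by
  set N := G.neighborFinset x
  have hxB : ∀ j, x ∉ B j := fun j => (hBmin j).notMem_of_mem_deleteVerts (mem_singleton_self x)
  have hbelow : ∀ q {D}, IsVertexCover (deleteVerts G {x}) D → N ⊆ D →
      ∃ l < toLex (Sum.inr q), joinCovers N x A (B ∘ idx) l ⊆ D := fun q D hD hND => by
    obtain ⟨i, hi⟩ := exists_subset_of_isVertexCover_deleteVerts_singleton G x hAenum hD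
    exact ⟨toLex (Sum.inl i), Sum.Lex.inl_lt_inr _ _, union_subset hND hi⟩
  intro i j hji
  obtain ⟨i | p, rfl⟩ := toLex.surjective i <;>
    obtain ⟨j | q, rfl⟩ := toLex.surjective j <;>
    simp only [joinCovers_inl, joinCovers_inr, Function.comp_apply]
  · obtain ⟨v, hvj, hvi, l, hl, hsub⟩ := hA (Sum.Lex.inl_lt_inl_iff.mp hji)
    have hvN : v ∉ N := fun hv =>
      ((hAenum (A j)).mpr ⟨j, rfl⟩).notMem_of_mem_deleteVerts (subset_insert _ _ hv) hvj
    refine ⟨v, mem_union_right _ hvj, by simp [hvN, hvi], toLex (Sum.inl l),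
      Sum.Lex.inl_lt_inl_iff.mpr hl, ?_⟩
    rw [joinCovers_inl]
    exact union_subset (subset_union_left.trans (subset_insert _ _))
      (hsub.trans (insert_subset_insert _ subset_union_right))
  · exact absurd hji Sum.Lex.not_inr_lt_inl
  · obtain ⟨y, hyN, hyB⟩ := not_subset.mp ((hidxenum (idx p)).mp ⟨p, rfl⟩)
    have hyx : y ≠ x := ((G.mem_neighborFinset x y).mp hyN).ne'
    obtain ⟨l, hl, hsub⟩ := hbelow p ((hBmin _).1.mono (subset_insert y _))
      (neighborFinset_subset_insert G x hcl (hBmin _).1 hyN hyB)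
    exact ⟨y, mem_union_left _ hyN, by simp [hyx, hyB], l, hl,
      hsub.trans (insert_subset_insert _ (subset_insert _ _))⟩
  · obtain ⟨v, hvq, hvp, l, hl, hsub⟩ := hB (hidx (Sum.Lex.inr_lt_inr_iff.mp hji))
    have hvx : v ≠ x := fun h => hxB _ (h ▸ hvq)
    have hsub' : B l ⊆ insert v (insert x (B (idx p))) :=
      hsub.trans (insert_subset_insert _ (subset_insert _ _))
    refine ⟨v, mem_insert_of_mem hvq, by simp [hvx, hvp], ?_⟩
    by_cases hN : N ⊆ B l
    · obtain ⟨l', hl', h'⟩ := hbelow p (hBmin l).1 hN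
      exact ⟨l', hl', h'.trans hsub'⟩
    · obtain ⟨r, rfl⟩ := (hidxenum l).mpr hN
      exact ⟨toLex (Sum.inr r), Sum.Lex.inr_lt_inr_iff.mpr (hidx.lt_iff_lt.mp hl),
        insert_subset (mem_insert_of_mem (mem_insert_self _ _)) hsub'⟩

end JoinCoversOfGraph

open MvPolynomial in
theorem stmt_7_general (K : Type) [Field K] {V : Type} [Fintype V] [LinearOrder V]
    (G : SimpleGraph V) [DecidableRel G.Adj] (x : V)
    (hcl : G.IsClique (closedNbhd G x : Set V))
    (a b kk : ℕ) (A : Fin a → Finset V) (B : Fin b → Finset V)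
    (hAenum : ∀ D : Finset V,
      IsMinVertexCover (deleteVerts G (closedNbhd G x)) D ↔ ∃ i, A i = D)
    (hALQ : IsLinQuotOrd (fun i => coverMonomial K (A i)))
    (hBenum : ∀ D : Finset V, IsMinVertexCover (deleteVerts G {x}) D ↔ ∃ i, B i = D)
    (hBLQ : IsLinQuotOrd (fun i => coverMonomial K (B i)))
    (idx : Fin kk → Fin b) (hidx : StrictMono idx)
    (hidxenum : ∀ j : Fin b, (∃ p, idx p = j) ↔ ¬ G.neighborFinset x ⊆ B j) :
    Ideal.span (Set.range (fun p : Fin a ⊕ₗ Fin kk => Sum.elim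
        (fun i => coverMonomial K (G.neighborFinset x) * coverMonomial K (A i))
        (fun p => X x * coverMonomial K (B (idx p))) (ofLex p))) = coverIdeal K G ∧
    IsLinQuotOrd (fun p : Fin a ⊕ₗ Fin kk => Sum.elim
        (fun i => coverMonomial K (G.neighborFinset x) * coverMonomial K (A i))
        (fun p => X x * coverMonomial K (B (idx p))) (ofLex p)) := by
  have hBmin : ∀ j, IsMinVertexCover (deleteVerts G {x}) (B j) :=
    fun j => (hBenum (B j)).mpr ⟨j, rfl⟩
  have hmonomials : (fun p : Fin a ⊕ₗ Fin kk => Sum.elim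
      (fun i => coverMonomial K (G.neighborFinset x) * coverMonomial K (A i))
      (fun p => X x * coverMonomial K (B (idx p))) (ofLex p)) =
      fun p => coverMonomial K (joinCovers (G.neighborFinset x) x A (B ∘ idx) p) := by
    funext p
    obtain ⟨i | q, rfl⟩ := toLex.surjective p
    · have hdisj := ((hAenum (A i)).mpr ⟨i, rfl⟩).disjoint_deleteVerts
      exact (coverMonomial_union (disjoint_of_subset_left (subset_insert _ _) hdisj)).symm
    · exact X_mul_coverMonomial ((hBmin _).notMem_of_mem_deleteVerts (mem_singleton_self x))
  rw [hmonomials, isLinQuotOrd_coverMonomial_iff]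
  refine ⟨?_, hasLinQuotExchange_joinCovers G x hcl hAenum
    (isLinQuotOrd_coverMonomial_iff.mp hALQ) hBmin (isLinQuotOrd_coverMonomial_iff.mp hBLQ) hidx
    hidxenum⟩
  have hcovers : {C | IsMinVertexCover G C} =
      Set.range (joinCovers (G.neighborFinset x) x A (B ∘ idx)) :=
    Set.ext fun C => isMinVertexCover_iff_exists_joinCovers G x hAenum hBenum hidxenum
  rw [coverIdeal, Set.range_comp', ← hcovers]
  congr 1
  ext m
  simp [eq_comm]

open MvPolynomial in
/-- Erey's recursive construction of a linear quotients ordering for `J(G)` from those of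
`J(G \ N[x])` and `J(G \ x)`. -/
theorem stmt_7 (K : Type) [Field K] {V : Type} [Fintype V] [LinearOrder V]
    (G : SimpleGraph V) [DecidableRel G.Adj] (hG : IsChordal G) (x : V)
    (hcl : G.IsClique (closedNbhd G x : Set V)) (hcard : 2 ≤ (closedNbhd G x).card)
    (a b kk : ℕ) (A : Fin a → Finset V) (B : Fin b → Finset V)
    (hAinj : Function.Injective A)
    (hAenum : ∀ D : Finset V,
      IsMinVertexCover (deleteVerts G (closedNbhd G x)) D ↔ ∃ i, A i = D)
    (hALQ : IsLinQuotOrd (fun i => coverMonomial K (A i)))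
    (hBinj : Function.Injective B)
    (hBenum : ∀ D : Finset V, IsMinVertexCover (deleteVerts G {x}) D ↔ ∃ i, B i = D)
    (hBLQ : IsLinQuotOrd (fun i => coverMonomial K (B i)))
    (idx : Fin kk → Fin b) (hidx : StrictMono idx)
    (hidxenum : ∀ j : Fin b, (∃ p, idx p = j) ↔ ¬ G.neighborFinset x ⊆ B j) :
    Ideal.span (Set.range (fun p : Fin a ⊕ₗ Fin kk => Sum.elim
        (fun i => coverMonomial K (G.neighborFinset x) * coverMonomial K (A i))
        (fun p => X x * coverMonomial K (B (idx p))) (ofLex p))) = coverIdeal K G ∧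
    IsLinQuotOrd (fun p : Fin a ⊕ₗ Fin kk => Sum.elim
        (fun i => coverMonomial K (G.neighborFinset x) * coverMonomial K (A i))
        (fun p => X x * coverMonomial K (B (idx p))) (ofLex p)) :=
  stmt_7_general K G x hcl a b kk A B hAenum hALQ hBenum hBLQ idx hidx hidxenum
end

section
/- For the path graph P_n on n ≥ 4 vertices, the number of minimal vertex covers of P_n equals the number of minimal vertex covers of P_{n−2} plus the number of minimal vertex covers of P_{n−3}. Consequently, the sequence c_n of numbers of minimal vertex covers of paths satisfies the Padovan recurrence c_n = c_{n−2} + c_{n−3}. -/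
open Finset

variable {V : Type} [Fintype V] [DecidableEq V]

/-!
A vertex lies in a minimal vertex cover `C` exactly when one of its neighbours lies outside `C`.
On the path `0 — 1 — ⋯ — (n - 1)` this condition is local, so look at the last vertex. If
`n - 1 ∉ C`, then `n - 2 ∈ C`, and removing `n - 2` leaves a minimal cover of the first `n - 2`
vertices. If `n - 1 ∈ C`, then `n - 2 ∉ C` and `n - 3 ∈ C`, and removing `n - 1` and `n - 3`
leaves a minimal cover of the first `n - 3` vertices. Inserting the removed vertices reverses
both operations.
-/

section MinVertexCover

variable {α : Type} [DecidableEq α] {G : SimpleGraph α} {C : Finset α}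

theorem IsVertexCover.erase (hC : IsVertexCover G C) {v : α} (hv : ∀ u, G.Adj v u → u ∈ C) :
    IsVertexCover G (C.erase v) := by
  intro a b hab
  rcases hC hab with ha | hb
  · by_cases hav : a = v
    · subst hav
      exact Or.inr (mem_erase.mpr ⟨hab.ne.symm, hv b hab⟩)
    · exact Or.inl (mem_erase.mpr ⟨hav, ha⟩)
  · by_cases hbv : b = v
    · subst hbv
      exact Or.inl (mem_erase.mpr ⟨hab.ne, hv a hab.symm⟩)
    · exact Or.inr (mem_erase.mpr ⟨hbv, hb⟩)

theorem isMinVertexCover_iff_forall_mem_iff :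
    IsMinVertexCover G C ↔ ∀ v, v ∈ C ↔ ∃ u, G.Adj v u ∧ u ∉ C := by
  constructor
  · rintro ⟨hC, hmin⟩ v
    constructor
    · intro hv
      by_contra! h
      exact hmin _ (erase_ssubset hv) (hC.erase h)
    · rintro ⟨u, hvu, hu⟩
      exact (hC hvu).resolve_right hu
  · intro h
    refine ⟨fun u v huv => ?_, fun D hDC hD => ?_⟩
    · by_contra! hne
      exact hne.1 ((h u).mpr ⟨v, huv, hne.2⟩)
    · obtain ⟨v, hvC, hvD⟩ := exists_of_ssubset hDC
      obtain ⟨u, hvu, hu⟩ := (h v).mp hvC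
      exact (hD hvu).elim hvD fun huD => hu (hDC.subset huD)

end MinVertexCover

section PathMinCovers

/-- The minimal vertex covers of the path `0 — 1 — ⋯ — (n - 1)` as sets of natural numbers,
cut out by the criterion `isMinVertexCover_iff_forall_mem_iff`. -/
def pathMinCovers (n : ℕ) : Finset (Finset ℕ) :=
  (range n).powerset.filter fun S =>
    ∀ i < n, (i ∈ S ↔ (0 < i ∧ i - 1 ∉ S) ∨ (i + 1 < n ∧ i + 1 ∉ S))

variable {n k : ℕ} {S T : Finset ℕ}

theorem mem_pathMinCovers : S ∈ pathMinCovers n ↔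
    S ⊆ range n ∧ ∀ i < n, (i ∈ S ↔ (0 < i ∧ i - 1 ∉ S) ∨ (i + 1 < n ∧ i + 1 ∉ S)) := by
  simp [pathMinCovers]

theorem isMinVertexCover_pathGraph_iff {C : Finset (Fin n)} :
    IsMinVertexCover (SimpleGraph.pathGraph n) C ↔ C.map Fin.valEmbedding ∈ pathMinCovers n := by
  have hsub : C.map Fin.valEmbedding ⊆ range n := by
    simp only [subset_iff, mem_map, Fin.valEmbedding_apply, mem_range]
    rintro _ ⟨v, -, rfl⟩
    exact v.2
  rw [isMinVertexCover_iff_forall_mem_iff, mem_pathMinCovers, and_iff_right hsub, Fin.forall_iff]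
  refine forall₂_congr fun i hi => ?_
  simp only [SimpleGraph.pathGraph_adj, Fin.exists_iff, mem_map, Fin.valEmbedding_apply]
  grind

theorem card_minVertexCovers_pathGraph (n : ℕ) :
    Nat.card {C : Finset (Fin n) // IsMinVertexCover (SimpleGraph.pathGraph n) C} =
      #(pathMinCovers n) := by
  rw [← Nat.card_eq_finsetCard]
  refine Nat.card_congr
    { toFun C := ⟨C.1.map Fin.valEmbedding, isMinVertexCover_pathGraph_iff.mp C.2⟩
      invFun S := ⟨S.1.attachFin fun i hi => mem_range.mp ((mem_pathMinCovers.mp S.2).1 hi),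
        isMinVertexCover_pathGraph_iff.mpr (by rw [map_valEmbedding_attachFin]; exact S.2)⟩
      left_inv C := Subtype.ext (map_injective Fin.valEmbedding (map_valEmbedding_attachFin _))
      right_inv S := Subtype.ext (map_valEmbedding_attachFin _) }

theorem insert_mem_pathMinCovers_add_two_iff (hS : S ⊆ range k) :
    insert k S ∈ pathMinCovers (k + 2) ↔ S ∈ pathMinCovers k := by
  have hS' : insert k S ⊆ range (k + 2) := insert_subset (by simp) (hS.trans (by simp))
  simp only [mem_pathMinCovers, hS, hS', true_and, Nat.forall_lt_succ_right]
  refine (and_iff_left ?_).trans ((and_iff_left ?_).trans (forall₂_congr fun i hi => ?_))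
  all_goals grind

theorem insert_insert_mem_pathMinCovers_add_three_iff (hS : S ⊆ range k) :
    insert (k + 2) (insert k S) ∈ pathMinCovers (k + 3) ↔ S ∈ pathMinCovers k := by
  have hS' : insert (k + 2) (insert k S) ⊆ range (k + 3) :=
    insert_subset (by simp) (insert_subset (by simp) (hS.trans (by simp)))
  simp only [mem_pathMinCovers, hS, hS', true_and, Nat.forall_lt_succ_right]
  refine (and_iff_left ?_).trans
    ((and_iff_left ?_).trans ((and_iff_left ?_).trans (forall₂_congr fun i hi => ?_)))
  all_goals grind

theorem erase_mem_pathMinCovers_of_notMem (hT : T ∈ pathMinCovers (k + 2)) (hk : k + 1 ∉ T) :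
    k ∈ T ∧ T.erase k ∈ pathMinCovers k := by
  obtain ⟨hsub, hcond⟩ := mem_pathMinCovers.mp hT
  have hkT : k ∈ T := by grind
  have hsub' : T.erase k ⊆ range k := by grind
  refine ⟨hkT, ?_⟩
  rwa [← insert_mem_pathMinCovers_add_two_iff hsub', insert_erase hkT]

theorem erase_erase_mem_pathMinCovers_of_mem (hT : T ∈ pathMinCovers (k + 3)) (hk : k + 2 ∈ T) :
    k ∈ T ∧ (T.erase (k + 2)).erase k ∈ pathMinCovers k := by
  obtain ⟨hsub, hcond⟩ := mem_pathMinCovers.mp hT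
  have hk1 : k + 1 ∉ T := by grind
  have hkT : k ∈ T := by grind
  have hsub' : (T.erase (k + 2)).erase k ⊆ range k := by grind
  refine ⟨hkT, ?_⟩
  rwa [← insert_insert_mem_pathMinCovers_add_three_iff hsub',
    insert_erase (mem_erase.mpr ⟨by omega, hkT⟩), insert_erase hk]

theorem card_pathMinCovers_add_three (m : ℕ) :
    #(pathMinCovers (m + 3)) = #(pathMinCovers (m + 1)) + #(pathMinCovers m) := by
  rw [← card_filter_add_card_filter_not (m + 2 ∈ ·), add_comm]
  congr 1
  · refine card_nbij' (·.erase (m + 1)) (insert (m + 1)) (fun T hT => ?_) (fun S hS => ?_)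
      (fun T hT => ?_) (fun S hS => ?_)
    · rw [mem_coe, mem_filter] at hT
      exact (erase_mem_pathMinCovers_of_notMem hT.1 hT.2).2
    · have hsub := (mem_pathMinCovers.mp hS).1
      refine mem_coe.mpr <| mem_filter.mpr
        ⟨(insert_mem_pathMinCovers_add_two_iff hsub).mpr hS, ?_⟩
      grind
    · rw [mem_coe, mem_filter] at hT
      exact insert_erase (erase_mem_pathMinCovers_of_notMem hT.1 hT.2).1
    · exact erase_insert fun h => by simpa using (mem_pathMinCovers.mp hS).1 h
  · refine card_nbij' (fun T => (T.erase (m + 2)).erase m) (fun S => insert (m + 2) (insert m S))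
      (fun T hT => ?_) (fun S hS => ?_) (fun T hT => ?_) (fun S hS => ?_)
    · rw [mem_coe, mem_filter] at hT
      exact (erase_erase_mem_pathMinCovers_of_mem hT.1 hT.2).2
    · have hsub := (mem_pathMinCovers.mp hS).1
      exact mem_coe.mpr <| mem_filter.mpr
        ⟨(insert_insert_mem_pathMinCovers_add_three_iff hsub).mpr hS, mem_insert_self _ _⟩
    · rw [mem_coe, mem_filter] at hT
      have hm := (erase_erase_mem_pathMinCovers_of_mem hT.1 hT.2).1
      dsimp only
      rw [insert_erase (mem_erase.mpr ⟨by omega, hm⟩), insert_erase hT.2]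
    · have hsub := (mem_pathMinCovers.mp hS).1
      grind

end PathMinCovers

/-- The numbers of minimal vertex covers of paths satisfy the Padovan recurrence. -/
theorem stmt_13 (n : ℕ) (hn : 4 ≤ n) :
    Nat.card {C : Finset (Fin n) // IsMinVertexCover (SimpleGraph.pathGraph n) C} =
      Nat.card {C : Finset (Fin (n - 2)) //
        IsMinVertexCover (SimpleGraph.pathGraph (n - 2)) C} +
      Nat.card {C : Finset (Fin (n - 3)) //
        IsMinVertexCover (SimpleGraph.pathGraph (n - 3)) C} := by
  obtain ⟨m, rfl⟩ : ∃ m, n = m + 3 := ⟨n - 3, by omega⟩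
  simp only [card_minVertexCovers_pathGraph, Nat.add_sub_cancel,
    show m + 3 - 2 = m + 1 by omega]
  exact card_pathMinCovers_add_three m
end
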